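/- arXiv:1703.10705 — 5 statements merged into one kernel-verified Lean document; each statement's English description precedes it below -/
import Mathlib

section
/- Let f : ℤ² → ℝ ∪ {+∞} be an integrally convex function. Then for all nonnegative integers a, b, the basic parallelogram inequality holds: f(0,0) + f(a+b, a) ≥ f(a,a) + f(b,0). -/
open scoped BigOperators

noncomputable section

/-- Integer neighborhood `N(x)` of a real point. -/
def intNbhd {n : ℕ} (x : Fin n → ℝ) : Set (Fin n → ℤ) :=
  {z | ∀ i, |x i - (z i : ℝ)| < 1}

/-- Local convex extension of `f : ℤⁿ → ℝ ∪ {+∞}`. -/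
noncomputable def localExt {n : ℕ} (f : (Fin n → ℤ) → EReal) (x : Fin n → ℝ) : EReal :=
  sInf { v : EReal | ∃ (m : ℕ) (lam : Fin m → ℝ) (y : Fin m → (Fin n → ℤ)),
      (∀ j, 0 ≤ lam j) ∧ (∑ j, lam j) = 1 ∧ (∀ j, y j ∈ intNbhd x) ∧
      (∀ i, (∑ j, lam j * ((y j i : ℝ))) = x i) ∧
      v = ∑ j, (((lam j : ℝ) : EReal) * f (y j)) }

/-- A function is integrally convex if its local convex extension is convex. -/
def IsIntegrallyConvexFn {n : ℕ} (f : (Fin n → ℤ) → EReal) : Prop :=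
  ∀ x y : Fin n → ℝ, ∀ t : ℝ, 0 ≤ t → t ≤ 1 →
    localExt f (fun i => t * x i + (1 - t) * y i) ≤
      ((t : ℝ) : EReal) * localExt f x + (((1 - t : ℝ)) : EReal) * localExt f y

/-- Coercion of an integer point to a real point. -/
def realify {n : ℕ} (z : Fin n → ℤ) : Fin n → ℝ := fun i => (z i : ℝ)

/-- A set `S ⊆ ℤⁿ` is integrally convex. -/
def IsIntegrallyConvexSet {n : ℕ} (S : Set (Fin n → ℤ)) : Prop :=
  ∀ x : Fin n → ℝ, x ∈ convexHull ℝ (realify '' S) →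
    x ∈ convexHull ℝ (realify '' (S ∩ intNbhd x))

/-! At a point of `ℝ²` with integral first coordinate, every representation in the definition
of the local convex extension `f̃` uses only the two lattice points directly below and above it,
so `f̃` is there at least the linear interpolation of `f` between them. Convexity of `f̃` along a
segment between lattice points through such a point bounds this interpolation by the convex
combination of the values at the endpoints. The midpoint of `(p, q)` and `(p + 2, q + 1)` gives
`f(p+1, q) + f(p+1, q+1) ≤ f(p, q) + f(p+2, q+1)`, i.e. submodularity of `g(s, t) = f(s + t, s)`
on unit squares, and summing over the `a × b` grid gives the inequality. The sum can only be
cancelled where `f` is finite; the point with first coordinate `p + 1` on the segment from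
`(p, q)` to `(p + a + b, q + a)` shows that finiteness at these two corners propagates to the
whole parallelogram. -/

open Finset

lemma EReal.sum_coe_mul_of_nonneg {ι : Type*} (s : Finset ι) (w : ι → ℝ)
    (hw : ∀ i ∈ s, 0 ≤ w i) (c : EReal) :
    ∑ i ∈ s, (w i : EReal) * c = ((∑ i ∈ s, w i : ℝ) : EReal) * c := by
  classical
  induction s using Finset.induction_on with
  | empty => simp
  | insert i s hi ih =>
    rw [sum_insert hi, sum_insert hi, ih (fun j hj => hw j (mem_insert_of_mem hj)), EReal.coe_add,
      EReal.right_distrib_of_nonneg (EReal.coe_nonneg.2 (hw i (mem_insert_self i s)))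
        (EReal.coe_nonneg.2 (sum_nonneg fun j hj => hw j (mem_insert_of_mem hj)))]

lemma EReal.coe_mul_ne_bot {c : ℝ} (hc : 0 ≤ c) {x : EReal} (hx : x ≠ ⊥) :
    (c : EReal) * x ≠ ⊥ :=
  (mul_ne_bot _ _).2
    ⟨.inl (coe_ne_bot c), .inr hx, .inl (coe_ne_top c), .inl (EReal.coe_nonneg.2 hc)⟩

lemma EReal.ne_top_of_coe_mul_ne_top {c : ℝ} (hc : 0 < c) {x : EReal}
    (h : (c : EReal) * x ≠ ⊤) : x ≠ ⊤ :=
  fun hx => h (hx ▸ coe_mul_top_of_pos hc)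

lemma Int.eq_of_abs_sub_lt_one {a b : ℤ} (h : |(a : ℝ) - b| < 1) : a = b := by
  rw [← Int.cast_sub, ← Int.cast_abs, ← Int.cast_one, Int.cast_lt, Int.abs_lt_one_iff] at h
  omega

section

variable {n : ℕ}

lemma eq_or_eq_add_single_of_mem_intNbhd {z y : Fin n → ℤ} {i : Fin n} {s : ℝ}
    (hs₀ : 0 ≤ s) (hs₁ : s ≤ 1) (hy : y ∈ intNbhd (realify z + s • Pi.single i 1)) :
    y = z ∨ y = z + Pi.single i 1 := by
  have hyi : y i = z i ∨ y i = z i + 1 := by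
    have := abs_lt.1 (hy i)
    simp only [realify, Pi.add_apply, Pi.smul_apply, Pi.single_eq_same, smul_eq_mul, mul_one]
      at this
    have h₁ : z i - 1 < y i := by exact_mod_cast (by linarith : (z i : ℝ) - 1 < y i)
    have h₂ : y i < z i + 2 := by exact_mod_cast (by linarith : (y i : ℝ) < z i + 2)
    omega
  have hyj : ∀ j ≠ i, y j = z j := fun j hj => by
    have := hy j
    simp only [realify, Pi.add_apply, Pi.smul_apply, Pi.single_eq_of_ne hj, smul_zero,
      add_zero] at this
    exact (Int.eq_of_abs_sub_lt_one this).symm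
  rcases hyi with h | h
  · left
    ext j
    by_cases hj : j = i
    · rw [hj, h]
    · exact hyj j hj
  · right
    ext j
    by_cases hj : j = i
    · subst hj; simp [h]
    · simp [hyj j hj, Pi.single_eq_of_ne hj]

lemma localExt_realify_le (f : (Fin n → ℤ) → EReal) (z : Fin n → ℤ) :
    localExt f (realify z) ≤ f z :=
  sInf_le ⟨1, fun _ => 1, fun _ => z, fun _ => zero_le_one, by simp,
    fun _ i => by simp [realify], fun i => by simp [realify], by simp⟩

lemma le_localExt_add_smul_single (f : (Fin n → ℤ) → EReal) (z : Fin n → ℤ) (i : Fin n)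
    {s : ℝ} (hs₀ : 0 ≤ s) (hs₁ : s ≤ 1) :
    ((1 - s : ℝ) : EReal) * f z + (s : EReal) * f (z + Pi.single i 1) ≤
      localExt f (realify z + s • Pi.single i 1) := by
  classical
  refine le_sInf ?_
  rintro v ⟨m, lam, y, hlam, hsum, hy, hbar, rfl⟩
  have hy' := fun j => eq_or_eq_add_single_of_mem_intNbhd hs₀ hs₁ (hy j)
  have hshift : ∑ j with ¬y j = z, lam j = s := by
    have hterm : ∀ j, lam j * (y j i : ℝ) = lam j * z i + if y j = z then 0 else lam j := by
      intro j
      rcases hy' j with h | h <;> simp [h, mul_add]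
    have h := hbar i
    simpa only [hterm, sum_add_distrib, ← sum_mul, hsum, one_mul, realify, Pi.add_apply,
      Pi.smul_apply, Pi.single_eq_same, smul_eq_mul, mul_one, add_right_inj, sum_ite,
      sum_const_zero, zero_add] using h
  have hbase : ∑ j with y j = z, lam j = 1 - s := by
    rw [← hsum, ← sum_filter_add_sum_filter_not univ (fun j => y j = z) lam, hshift]; ring
  rw [← sum_filter_add_sum_filter_not univ (fun j => y j = z), ← hbase, ← hshift,
    ← EReal.sum_coe_mul_of_nonneg _ _ (fun j _ => hlam j),
    ← EReal.sum_coe_mul_of_nonneg _ _ (fun j _ => hlam j)]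
  refine le_of_eq <|
    congrArg₂ (· + ·) (sum_congr rfl fun j hj => ?_) (sum_congr rfl fun j hj => ?_)
  · rw [(mem_filter.1 hj).2]
  · rw [(hy' j).resolve_left (mem_filter.1 hj).2]

namespace IsIntegrallyConvexFn

variable {f : (Fin n → ℤ) → EReal} {P Q z : Fin n → ℤ} {i : Fin n} {t s : ℝ}

lemma segment_interp_le (hf : IsIntegrallyConvexFn f) (ht₀ : 0 ≤ t) (ht₁ : t ≤ 1)
    (hs₀ : 0 ≤ s) (hs₁ : s ≤ 1)
    (hx : (fun j => t * realify P j + (1 - t) * realify Q j) = realify z + s • Pi.single i 1) :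
    ((1 - s : ℝ) : EReal) * f z + (s : EReal) * f (z + Pi.single i 1) ≤
      (t : EReal) * f P + ((1 - t : ℝ) : EReal) * f Q := by
  have hconv := hf (realify P) (realify Q) t ht₀ ht₁
  rw [hx] at hconv
  refine (le_localExt_add_smul_single f z i hs₀ hs₁).trans (hconv.trans ?_)
  gcongr <;> exact localExt_realify_le f _

lemma ne_top_of_segment (hf : IsIntegrallyConvexFn f) (hbot : ∀ x, f x ≠ ⊥)
    (ht₀ : 0 ≤ t) (ht₁ : t ≤ 1) (hs₀ : 0 ≤ s) (hs₁ : s ≤ 1)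
    (hx : (fun j => t * realify P j + (1 - t) * realify Q j) = realify z + s • Pi.single i 1)
    (hP : f P ≠ ⊤) (hQ : f Q ≠ ⊤) :
    (s < 1 → f z ≠ ⊤) ∧ (0 < s → f (z + Pi.single i 1) ≠ ⊤) := by
  have hrhs : (t : EReal) * f P + ((1 - t : ℝ) : EReal) * f Q ≠ ⊤ := by
    rw [← EReal.coe_toReal hP (hbot P), ← EReal.coe_toReal hQ (hbot Q)]
    exact_mod_cast EReal.coe_ne_top _
  have hlhs := ne_top_of_le_ne_top hrhs (hf.segment_interp_le ht₀ ht₁ hs₀ hs₁ hx)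
  rw [EReal.add_ne_top_iff_ne_top₂ (EReal.coe_mul_ne_bot (by linarith) (hbot _))
    (EReal.coe_mul_ne_bot hs₀ (hbot _))] at hlhs
  exact ⟨fun hs => EReal.ne_top_of_coe_mul_ne_top (by linarith) hlhs.1,
    fun hs => EReal.ne_top_of_coe_mul_ne_top hs hlhs.2⟩

lemma add_le_add_of_add_eq_two_smul_add_single (hf : IsIntegrallyConvexFn f)
    (hbot : ∀ x, f x ≠ ⊥) (h : P + Q = 2 • z + Pi.single i 1) :
    f z + f (z + Pi.single i 1) ≤ f P + f Q := by
  rcases eq_or_ne (f P + f Q) ⊤ with hPQ | hPQ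
  · exact hPQ ▸ le_top
  obtain ⟨hP, hQ⟩ := (EReal.add_ne_top_iff_ne_top₂ (hbot P) (hbot Q)).1 hPQ
  have hx : (fun j => 2⁻¹ * realify P j + (1 - 2⁻¹) * realify Q j) =
      realify z + (2⁻¹ : ℝ) • Pi.single i 1 := by
    funext j
    have hj := congrArg (fun v : Fin n → ℤ => (v j : ℝ)) h
    by_cases hji : j = i
    · subst hji; simp [realify] at hj ⊢; linarith
    · simp [realify, Pi.single_eq_of_ne hji] at hj ⊢; linarith
  have hfin := hf.ne_top_of_segment hbot (by norm_num) (by norm_num) (by norm_num) (by norm_num)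
    hx hP hQ
  have key := hf.segment_interp_le (by norm_num) (by norm_num) (by norm_num) (by norm_num) hx
  rw [← EReal.coe_toReal hP (hbot P), ← EReal.coe_toReal hQ (hbot Q),
    ← EReal.coe_toReal (hfin.1 (by norm_num)) (hbot _),
    ← EReal.coe_toReal (hfin.2 (by norm_num)) (hbot _)] at key ⊢
  norm_cast at key ⊢
  linarith

end IsIntegrallyConvexFn

end

lemma add_le_add_of_add_le_add_succ {α : Type*} [AddCommMonoid α] [PartialOrder α]
    [IsOrderedCancelAddMonoid α] (u v : ℕ → α) {b : ℕ}
    (h : ∀ t < b, u t + v (t + 1) ≤ v t + u (t + 1)) : u 0 + v b ≤ v 0 + u b := by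
  induction b with
  | zero => rw [add_comm]
  | succ b ih =>
    have hsum := add_le_add (ih fun t ht => h t (by omega)) (h b (by omega))
    refine le_of_add_le_add_right (a := u b + v b) ?_
    convert hsum using 1 <;> abel

lemma add_le_add_of_grid_submodular {α : Type*} [AddCommMonoid α] [PartialOrder α]
    [IsOrderedCancelAddMonoid α] (G : ℕ → ℕ → α) {a b : ℕ}
    (h : ∀ s < a, ∀ t < b, G (s + 1) t + G s (t + 1) ≤ G s t + G (s + 1) (t + 1)) :
    G a 0 + G 0 b ≤ G 0 0 + G a b := by
  have hrow : ∀ s < a, G (s + 1) 0 + G s b ≤ G s 0 + G (s + 1) b := fun s hs =>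
    add_le_add_of_add_le_add_succ (G (s + 1)) (G s) (h s hs)
  rw [add_comm]
  exact add_le_add_of_add_le_add_succ (G · b) (G · 0) fun s hs => by
    rw [add_comm]; exact hrow s hs

namespace IsIntegrallyConvexFn

variable {f : (Fin 2 → ℤ) → EReal}

lemma skewGrid_submodular (hf : IsIntegrallyConvexFn f) (hbot : ∀ x, f x ≠ ⊥) (s t : ℕ) :
    f ![↑(s + 1) + t, ↑(s + 1)] + f ![s + ↑(t + 1), s] ≤
      f ![s + t, s] + f ![↑(s + 1) + ↑(t + 1), ↑(s + 1)] := by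
  have h := hf.add_le_add_of_add_eq_two_smul_add_single hbot (i := 1)
    (P := ![s + t, s]) (Q := ![↑(s + 1) + ↑(t + 1), ↑(s + 1)]) (z := ![s + ↑(t + 1), s])
    (by ext j; fin_cases j <;> simp <;> ring)
  rw [add_comm]
  convert h using 3
  ext j; fin_cases j <;> simp; ring

lemma ne_top_of_parallelogram_step (hf : IsIntegrallyConvexFn f) (hbot : ∀ x, f x ≠ ⊥)
    {p q : ℤ} {a b : ℕ} (hP : f ![p, q] ≠ ⊤) (hQ : f ![p + a + b, q + a] ≠ ⊤) :
    (0 < b → f ![p + 1, q] ≠ ⊤) ∧ (0 < a → f ![p + 1, q + 1] ≠ ⊤) := by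
  rcases Nat.eq_zero_or_pos (a + b) with hN | hN
  · exact ⟨fun hb => by omega, fun ha => by omega⟩
  have hN' : (0 : ℝ) < a + b := by exact_mod_cast hN
  have hx : (fun j => (1 - 1 / (a + b : ℝ)) * realify ![p, q] j +
      (1 - (1 - 1 / (a + b : ℝ))) * realify ![p + a + b, q + a] j) =
      realify ![p + 1, q] + ((a : ℝ) / (a + b)) • Pi.single 1 1 := by
    funext j; fin_cases j <;> simp [realify] <;> field_simp <;> ring
  have hfin := hf.ne_top_of_segment hbot (P := ![p, q]) (Q := ![p + a + b, q + a])
    (sub_nonneg.2 (div_le_one_of_le₀ (by exact_mod_cast hN) hN'.le))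
    (sub_le_self _ (by positivity)) (by positivity) (div_le_one_of_le₀ (by simp) hN'.le)
    hx hP hQ
  have hz : ![p + 1, q] + Pi.single 1 1 = ![p + 1, q + 1] := by ext j; fin_cases j <;> simp
  refine ⟨fun hb => hfin.1 ?_, fun ha => hz ▸ hfin.2 (by positivity)⟩
  rw [div_lt_one hN']
  exact_mod_cast (by omega : a < a + b)

lemma ne_top_of_mem_parallelogram (hf : IsIntegrallyConvexFn f) (hbot : ∀ x, f x ≠ ⊥)
    {a b : ℕ} {p q : ℤ} (hP : f ![p, q] ≠ ⊤) (hQ : f ![p + a + b, q + a] ≠ ⊤)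
    {s t : ℕ} (hs : s ≤ a) (ht : t ≤ b) : f ![p + s + t, q + s] ≠ ⊤ := by
  induction hN : a + b generalizing a b p q s t with
  | zero =>
    obtain ⟨rfl, rfl⟩ : s = 0 ∧ t = 0 := by omega
    simpa using hP
  | succ N ih =>
    have hstep := hf.ne_top_of_parallelogram_step hbot hP hQ
    rcases s with _ | s
    · rcases t with _ | t
      · simpa using hP
      have hQ' : f ![p + 1 + a + ↑(b - 1), q + a] ≠ ⊤ := by
        rwa [show p + 1 + a + ↑(b - 1) = p + a + b by omega]
      have h := ih (hstep.1 (by omega)) hQ' hs (by omega : t ≤ b - 1) (by omega)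
      rwa [show p + 1 + ((0 : ℕ) : ℤ) + t = p + ((0 : ℕ) : ℤ) + ↑(t + 1) by omega] at h
    · have hQ' : f ![p + 1 + ↑(a - 1) + b, q + 1 + ↑(a - 1)] ≠ ⊤ := by
        rwa [show p + 1 + ↑(a - 1) + b = p + a + b by omega,
          show q + 1 + ↑(a - 1) = q + a by omega]
      have h := ih (hstep.2 (by omega)) hQ' (by omega : s ≤ a - 1) ht (by omega)
      rwa [show p + 1 + s + t = p + ↑(s + 1) + t by omega,
        show q + 1 + s = q + ↑(s + 1) by omega] at h

end IsIntegrallyConvexFn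

/-- Basic parallelogram inequality for integrally convex functions on ℤ². -/
theorem basic_parallelogram_inequality
    (f : (Fin 2 → ℤ) → EReal) (hbot : ∀ x, f x ≠ ⊥)
    (hf : IsIntegrallyConvexFn f) (a b : ℕ) :
    f ![(a : ℤ), (a : ℤ)] + f ![(b : ℤ), 0] ≤
      f ![0, 0] + f ![(a : ℤ) + (b : ℤ), (a : ℤ)] := by
  rcases eq_or_ne (f ![0, 0] + f ![(a : ℤ) + (b : ℤ), (a : ℤ)]) ⊤ with htop | htop
  · exact htop ▸ le_top
  obtain ⟨h₀, h₁⟩ := (EReal.add_ne_top_iff_ne_top₂ (hbot _) (hbot _)).1 htop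
  have hfin : ∀ s ≤ a, ∀ t ≤ b, f ![(s : ℤ) + t, s] ≠ ⊤ := fun s hs t ht => by
    simpa using hf.ne_top_of_mem_parallelogram hbot (p := 0) (q := 0) h₀
      (by simpa using h₁) hs ht
  set G : ℕ → ℕ → ℝ := fun s t => (f ![(s : ℤ) + t, s]).toReal
  have hG : ∀ s ≤ a, ∀ t ≤ b, f ![(s : ℤ) + t, s] = G s t := fun s hs t ht =>
    (EReal.coe_toReal (hfin s hs t ht) (hbot _)).symm
  have hgrid := add_le_add_of_grid_submodular G fun s hs t ht => by
    have h := hf.skewGrid_submodular hbot s t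
    rwa [hG _ hs.le _ ht.le, hG _ hs _ ht.le, hG _ hs.le _ ht, hG _ hs _ ht,
      ← EReal.coe_add, ← EReal.coe_add, EReal.coe_le_coe_iff] at h
  rw [show f ![(a : ℤ), a] = G a 0 by simpa using hG a le_rfl 0 b.zero_le,
    show f ![(b : ℤ), 0] = G 0 b by simpa using hG 0 a.zero_le b le_rfl,
    show f ![0, 0] = G 0 0 by simpa using hG 0 a.zero_le 0 b.zero_le, hG a le_rfl b le_rfl]
  exact_mod_cast hgrid
end
end

section
/- Let S ⊆ ℤ² be an integrally convex set and α a positive integer. Then the set S^α = {x ∈ ℤ² : αx ∈ S} is an integrally convex set. -/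
open scoped BigOperators

noncomputable section

/-!
In the plane, a set `S ⊆ ℤ²` is integrally convex exactly when `slabHull octagonNormals S ⊆ S`,
i.e. when `S` is the set of integer points of a possibly unbounded polygon whose edges are
horizontal, vertical or diagonal. This description only compares values of the linear forms `z₀`, `z₁`, `z₀ + z₁`,
`z₁ - z₀` at points of `S`, and multiplying every point by `α ≥ 0` preserves these comparisons, so
it passes from `S` to `{x | α • x ∈ S}`.

For the forward direction one may intersect `S` with a large cube and assume `S` finite. The
lowest points of the columns of `S` then form a convex sequence with steps in `{-1, 0, 1}`, so at
every column a line of slope `-1`, `0` or `1` supports `S` from below; by symmetry also from above,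
and these are octagon constraints. Conversely, given a point `x` of the convex hull, the octagon
constraints select a triangle of the unit cell around `x` whose vertices of positive weight all
lie in `S`.
-/

section General

variable {n : ℕ}

lemma realify_dotProduct_realify (c z : Fin n → ℤ) :
    realify c ⬝ᵥ realify z = ((c ⬝ᵥ z : ℤ) : ℝ) := by
  simp [realify, dotProduct]

lemma realify_neg (z : Fin n → ℤ) : realify (-z) = -realify z := by
  ext i; simp [realify]

lemma image_realify_neg (S : Set (Fin n → ℤ)) : realify '' (-S) = -(realify '' S) := by
  rw [← Set.image_neg_eq_neg, ← Set.image_neg_eq_neg, Set.image_image, Set.image_image]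
  simp only [realify_neg]

lemma neg_mem_intNbhd_neg {x : Fin n → ℝ} {z : Fin n → ℤ} (hz : z ∈ intNbhd x) :
    -z ∈ intNbhd (-x) := fun i => by
  simpa [abs_sub_comm, neg_add_eq_sub] using hz i

lemma segment_realify_subset_convexHull {S : Set (Fin n → ℤ)} {p q : Fin n → ℤ}
    (hp : p ∈ S) (hq : q ∈ S) :
    segment ℝ (realify p) (realify q) ⊆ convexHull ℝ (realify '' S) :=
  segment_subset_convexHull (Set.mem_image_of_mem _ hp) (Set.mem_image_of_mem _ hq)

lemma midpoint_mem_convexHull_image_realify {S : Set (Fin n → ℤ)} {p q : Fin n → ℤ}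
    (hp : p ∈ S) (hq : q ∈ S) :
    (1 / 2 : ℝ) • realify p + (1 / 2 : ℝ) • realify q ∈ convexHull ℝ (realify '' S) :=
  segment_realify_subset_convexHull hp hq ⟨1 / 2, 1 / 2, by norm_num, by norm_num, by norm_num, rfl⟩

lemma exists_mem_segment_apply_eq {p q : Fin n → ℝ} (i : Fin n) {r : ℝ}
    (hr : r ∈ Set.uIcc (p i) (q i)) : ∃ y ∈ segment ℝ p q, y i = r := by
  rw [← segment_eq_uIcc] at hr
  have := image_segment ℝ (LinearMap.proj i : (Fin n → ℝ) →ₗ[ℝ] ℝ).toAffineMap p q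
  simp only [LinearMap.coe_toAffineMap, LinearMap.coe_proj, Function.eval] at this
  rwa [← this] at hr

lemma exists_mem_dotProduct_le {T : Set (Fin n → ℤ)} {x : Fin n → ℝ}
    (hx : x ∈ convexHull ℝ (realify '' T)) (c : Fin n → ℝ) :
    ∃ z ∈ T, c ⬝ᵥ realify z ≤ c ⬝ᵥ x := by
  obtain ⟨_, ⟨z, hz, rfl⟩, h⟩ := ((dotProductBilin ℝ ℝ c).concaveOn convex_univ)
    |>.exists_le_of_mem_convexHull (Set.subset_univ _) hx
  exact ⟨z, hz, h⟩

lemma exists_mem_le_dotProduct {T : Set (Fin n → ℤ)} {x : Fin n → ℝ}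
    (hx : x ∈ convexHull ℝ (realify '' T)) (c : Fin n → ℝ) :
    ∃ z ∈ T, c ⬝ᵥ x ≤ c ⬝ᵥ realify z := by
  obtain ⟨z, hz, h⟩ := exists_mem_dotProduct_le hx (-c)
  exact ⟨z, hz, by simpa only [neg_dotProduct, neg_le_neg_iff] using h⟩

lemma exists_mem_dotProduct_le_of_lt_add_one {T : Set (Fin n → ℤ)} {x : Fin n → ℝ}
    (hx : x ∈ convexHull ℝ (realify '' T)) {c : Fin n → ℤ} {m : ℤ}
    (h : realify c ⬝ᵥ x < m + 1) : ∃ u ∈ T, c ⬝ᵥ u ≤ m := by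
  obtain ⟨u, hu, hle⟩ := exists_mem_dotProduct_le hx (realify c)
  rw [realify_dotProduct_realify] at hle
  exact ⟨u, hu, Int.lt_add_one_iff.mp (by exact_mod_cast hle.trans_lt h)⟩

lemma exists_mem_le_dotProduct_of_sub_one_lt {T : Set (Fin n → ℤ)} {x : Fin n → ℝ}
    (hx : x ∈ convexHull ℝ (realify '' T)) {c : Fin n → ℤ} {m : ℤ}
    (h : m - 1 < realify c ⬝ᵥ x) : ∃ v ∈ T, m ≤ c ⬝ᵥ v := by
  obtain ⟨v, hv, hle⟩ := exists_mem_le_dotProduct hx (realify c)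
  rw [realify_dotProduct_realify] at hle
  exact ⟨v, hv, Int.sub_one_lt_iff.mp (by exact_mod_cast h.trans_le hle)⟩

lemma IsIntegrallyConvexSet.exists_mem_inter_dotProduct_le {S : Set (Fin n → ℤ)}
    (hS : IsIntegrallyConvexSet S) {x : Fin n → ℝ} (hx : x ∈ convexHull ℝ (realify '' S))
    (c : Fin n → ℝ) : ∃ z ∈ S ∩ intNbhd x, c ⬝ᵥ realify z ≤ c ⬝ᵥ x :=
  exists_mem_dotProduct_le (hS x hx) c

lemma IsIntegrallyConvexSet.neg {S : Set (Fin n → ℤ)} (hS : IsIntegrallyConvexSet S) :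
    IsIntegrallyConvexSet (-S) := by
  intro x hx
  rw [image_realify_neg, convexHull_neg] at hx
  rw [← neg_neg x, ← Set.mem_neg, ← convexHull_neg, ← image_realify_neg]
  refine convexHull_mono (Set.image_mono ?_) (hS (-x) hx)
  rintro z ⟨hzS, hz⟩
  exact ⟨by simpa using hzS, by simpa using neg_mem_intNbhd_neg hz⟩

def intCube (n : ℕ) (N : ℤ) : Set (Fin n → ℤ) := Set.univ.pi fun _ => Set.Icc (-N) N

lemma intCube_finite (n : ℕ) (N : ℤ) : (intCube n N).Finite :=
  Set.Finite.pi fun _ => Set.finite_Icc _ _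

lemma eventually_mem_intCube (z : Fin n → ℤ) : ∀ᶠ N in Filter.atTop, z ∈ intCube n N := by
  simp only [intCube, Set.mem_univ_pi, Set.mem_Icc, ← abs_le]
  exact Filter.eventually_all.2 fun i => Filter.eventually_ge_atTop _

lemma IsIntegrallyConvexSet.inter_intCube {S : Set (Fin n → ℤ)} (hS : IsIntegrallyConvexSet S)
    (N : ℤ) : IsIntegrallyConvexSet (S ∩ intCube n N) := by
  intro x hx
  have hxN : ∀ i, x i ∈ Set.Icc (-(N : ℝ)) N := by
    have hsub : realify '' (S ∩ intCube n N) ⊆ Set.univ.pi fun _ => Set.Icc (-(N : ℝ)) N := by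
      rintro _ ⟨z, ⟨-, hz⟩, rfl⟩ i -
      simp only [realify, Set.mem_Icc]
      exact_mod_cast hz i (Set.mem_univ i)
    exact fun i => convexHull_min hsub (convex_pi fun _ _ => convex_Icc _ _) hx i (Set.mem_univ i)
  refine convexHull_mono (Set.image_mono ?_)
    (hS x (convexHull_mono (Set.image_mono Set.inter_subset_left) hx))
  rintro z ⟨hzS, hz⟩
  refine ⟨⟨hzS, fun i _ => ?_⟩, hz⟩
  have h1 := abs_sub_lt_iff.mp (hz i)
  have h2 := hxN i
  have hlo : (-N : ℝ) - 1 < z i := by linarith [h1.1, h2.1]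
  have hhi : (z i : ℝ) < N + 1 := by linarith [h1.2, h2.2]
  have : -N - 1 < z i := by exact_mod_cast hlo
  have : z i < N + 1 := by exact_mod_cast hhi
  constructor <;> omega

/-- The integer points of the smallest polyhedron containing `T` whose facet normals lie in `D`
(a facet may be missing when `T` is unbounded in that direction). -/
def slabHull (D T : Set (Fin n → ℤ)) : Set (Fin n → ℤ) :=
  {z | ∀ c ∈ D, (∃ u ∈ T, c ⬝ᵥ u ≤ c ⬝ᵥ z) ∧ ∃ v ∈ T, c ⬝ᵥ z ≤ c ⬝ᵥ v}

lemma exists_mem_slabHull_inter_intCube {D T : Set (Fin n → ℤ)} (hD : D.Finite)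
    {z : Fin n → ℤ} (hz : z ∈ slabHull D T) : ∃ N, z ∈ slabHull D (T ∩ intCube n N) := by
  have h : ∀ᶠ N in Filter.atTop, z ∈ slabHull D (T ∩ intCube n N) :=
    (Filter.eventually_all_finite hD).2 fun c hc => by
      obtain ⟨⟨u, hu, hcu⟩, v, hv, hcv⟩ := hz c hc
      filter_upwards [eventually_mem_intCube u, eventually_mem_intCube v] with N huN hvN
      exact ⟨⟨u, ⟨hu, huN⟩, hcu⟩, v, ⟨hv, hvN⟩, hcv⟩
  exact h.exists

lemma neg_mem_slabHull_neg {D T : Set (Fin n → ℤ)} {z : Fin n → ℤ} (hz : z ∈ slabHull D T) :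
    -z ∈ slabHull D (-T) := by
  intro c hc
  obtain ⟨⟨u, hu, hcu⟩, v, hv, hcv⟩ := hz c hc
  refine ⟨⟨-v, by simpa using hv, ?_⟩, -u, by simpa using hu, ?_⟩ <;>
    simpa only [dotProduct_neg, neg_le_neg_iff]

lemma smul_mem_slabHull {D T : Set (Fin n → ℤ)} {a : ℤ} (ha : 0 ≤ a) {z : Fin n → ℤ}
    (hz : z ∈ slabHull D {z | a • z ∈ T}) : a • z ∈ slabHull D T := by
  intro c hc
  obtain ⟨⟨u, hu, hcu⟩, v, hv, hcv⟩ := hz c hc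
  refine ⟨⟨a • u, hu, ?_⟩, a • v, hv, ?_⟩ <;>
    simpa only [dotProduct_smul, smul_eq_mul] using mul_le_mul_of_nonneg_left ‹_› ha

lemma slabHull_preimage_smul_subset {D T : Set (Fin n → ℤ)} {a : ℤ} (ha : 0 ≤ a)
    (hT : slabHull D T ⊆ T) : slabHull D {z | a • z ∈ T} ⊆ {z | a • z ∈ T} :=
  fun _ hz => hT (smul_mem_slabHull ha hz)

end General

lemma add_add_smul_mem_convexHull {E : Type*} [AddCommGroup E] [Module ℝ E] {A : Set E}
    {p q r : E} {α β γ : ℝ} (hα : 0 ≤ α) (hβ : 0 ≤ β) (hγ : 0 ≤ γ) (hαβγ : α + β + γ = 1)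
    (hp : α ≠ 0 → p ∈ A) (hq : β ≠ 0 → q ∈ A) (hr : γ ≠ 0 → r ∈ A) :
    α • p + β • q + γ • r ∈ convexHull ℝ A := by
  have := (convex_convexHull ℝ A).finsum_mem (w := ![α, β, γ]) (z := ![p, q, r])
    (fun i => by fin_cases i <;> simpa)
    (by simpa [finsum_eq_sum_of_fintype, Fin.sum_univ_three] using hαβγ)
    (fun i hi => by
      fin_cases i
      · exact subset_convexHull ℝ A (hp hi)
      · exact subset_convexHull ℝ A (hq hi)
      · exact subset_convexHull ℝ A (hr hi))
  simpa [finsum_eq_sum_of_fintype, Fin.sum_univ_three, add_assoc] using this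

section DiscreteConvexity

def DiscreteConvexOn (I : Set ℤ) (f : ℤ → ℤ) : Prop :=
  ∀ j, j - 1 ∈ I → j + 1 ∈ I → 2 * f j ≤ f (j - 1) + f (j + 1)

variable {I : Set ℤ} [I.OrdConnected] {f : ℤ → ℤ}

lemma DiscreteConvexOn.add_mul_sub_le_of_le (hf : DiscreteConvexOn I f) {k s : ℤ} (hk : k ∈ I)
    (hright : k + 1 ∈ I → s ≤ f (k + 1) - f k) :
    ∀ j ∈ I, k ≤ j → f k + s * (j - k) ≤ f j ∧ (j + 1 ∈ I → s ≤ f (j + 1) - f j) := by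
  intro j hj hkj
  induction j, hkj using Int.leInduction with
  | base => simpa using hright
  | succ j hkj ih =>
    have hjI : j ∈ I := Set.OrdConnected.out ‹_› hk hj ⟨hkj, by omega⟩
    obtain ⟨hval, hstep⟩ := ih hjI
    refine ⟨by linarith [hstep hj, show s * (j + 1 - k) = s * (j - k) + s by ring], fun hj2 => ?_⟩
    have := hf (j + 1) (by simpa using hjI) hj2
    simp only [add_sub_cancel_right] at this
    linarith [hstep hj]

lemma DiscreteConvexOn.add_mul_sub_le_of_ge (hf : DiscreteConvexOn I f) {k s : ℤ} (hk : k ∈ I)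
    (hleft : k - 1 ∈ I → f k - f (k - 1) ≤ s) :
    ∀ j ∈ I, j ≤ k → f k + s * (j - k) ≤ f j ∧ (j - 1 ∈ I → f j - f (j - 1) ≤ s) := by
  intro j hj hjk
  induction j, hjk using Int.leInductionDown with
  | base => simpa using hleft
  | pred j hjk ih =>
    have hjI : j ∈ I := Set.OrdConnected.out ‹_› hj hk ⟨by omega, hjk⟩
    obtain ⟨hval, hstep⟩ := ih hjI
    refine ⟨by linarith [hstep hj, show s * (j - 1 - k) = s * (j - k) - s by ring], fun hj2 => ?_⟩
    have := hf (j - 1) hj2 (by simpa using hjI)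
    simp only [sub_add_cancel] at this
    linarith [hstep hj]

lemma DiscreteConvexOn.add_mul_sub_le (hf : DiscreteConvexOn I f) {k s : ℤ} (hk : k ∈ I)
    (hleft : k - 1 ∈ I → f k - f (k - 1) ≤ s) (hright : k + 1 ∈ I → s ≤ f (k + 1) - f k)
    {j : ℤ} (hj : j ∈ I) : f k + s * (j - k) ≤ f j := by
  rcases le_total k j with hkj | hjk
  · exact (hf.add_mul_sub_le_of_le hk hright j hj hkj).1
  · exact (hf.add_mul_sub_le_of_ge hk hleft j hj hjk).1

lemma DiscreteConvexOn.exists_abs_le_one_add_mul_sub_le (hf : DiscreteConvexOn I f)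
    (hstep : ∀ j, j ∈ I → j + 1 ∈ I → |f (j + 1) - f j| ≤ 1) {k : ℤ} (hk : k ∈ I) :
    ∃ s : ℤ, |s| ≤ 1 ∧ ∀ j ∈ I, f k + s * (j - k) ≤ f j := by
  have hmono : k - 1 ∈ I → k + 1 ∈ I → f k - f (k - 1) ≤ f (k + 1) - f k := fun hprev hnext => by
    linarith [hf k hprev hnext]
  by_cases hdown : k + 1 ∈ I ∧ f (k + 1) - f k = -1
  · refine ⟨-1, by norm_num, fun j => hf.add_mul_sub_le hk (fun h => ?_) (fun _ => hdown.2.ge)⟩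
    linarith [hmono h hdown.1, hdown.2]
  by_cases hup : k - 1 ∈ I ∧ f k - f (k - 1) = 1
  · refine ⟨1, by norm_num, fun j => hf.add_mul_sub_le hk (fun _ => hup.2.le) (fun h => ?_)⟩
    linarith [hmono hup.1 h, hup.2]
  refine ⟨0, by norm_num, fun j => hf.add_mul_sub_le hk (fun h => ?_) (fun h => ?_)⟩
  · have := abs_le.mp (hstep (k - 1) h (by simpa using hk))
    simp only [sub_add_cancel] at this
    have : f k - f (k - 1) ≠ 1 := fun he => hup ⟨h, he⟩
    omega
  · have := abs_le.mp (hstep k hk h)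
    have : f (k + 1) - f k ≠ -1 := fun he => hdown ⟨h, he⟩
    omega

end DiscreteConvexity

def octagonNormals : Set (Fin 2 → ℤ) := {![1, 0], ![0, 1], ![1, 1], ![-1, 1]}

def column (S : Set (Fin 2 → ℤ)) (k : ℤ) : Set ℤ := {c | ![k, c] ∈ S}

/-- `sInf` returns a junk value unless the column is nonempty and bounded below. -/
def colMin (S : Set (Fin 2 → ℤ)) (k : ℤ) : ℤ := sInf (column S k)

lemma vec_two_eta (z : Fin 2 → ℤ) : ![z 0, z 1] = z := by
  ext i; fin_cases i <;> rfl

section Columns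

variable {S : Set (Fin 2 → ℤ)}

lemma IsIntegrallyConvexSet.floor_mem_column (hS : IsIntegrallyConvexSet S) {y : Fin 2 → ℝ}
    (hy : y ∈ convexHull ℝ (realify '' S)) {k : ℤ} (hk : y 0 = k) : ⌊y 1⌋ ∈ column S k := by
  obtain ⟨z, ⟨hzS, hzN⟩, hz⟩ := hS.exists_mem_inter_dotProduct_le hy ![0, 1]
  simp only [Matrix.vec2_dotProduct, Matrix.cons_val_zero, Matrix.cons_val_one,
    Matrix.cons_val_fin_one, zero_mul, one_mul, zero_add, realify] at hz
  have h0 := abs_sub_lt_iff.mp (hzN 0)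
  have h1 := abs_sub_lt_iff.mp (hzN 1)
  rw [hk] at h0
  have e0 : z 0 = k := by
    have : k - z 0 < 1 := by exact_mod_cast h0.1
    have : z 0 - k < 1 := by exact_mod_cast h0.2
    omega
  have e1 : ⌊y 1⌋ = z 1 := Int.floor_eq_iff.mpr ⟨hz, by linarith [h1.1]⟩
  show ![k, ⌊y 1⌋] ∈ S
  rwa [e1, ← e0, vec_two_eta]

lemma IsIntegrallyConvexSet.ordConnected_column (hS : IsIntegrallyConvexSet S) (k : ℤ) :
    (column S k).OrdConnected := by
  refine ⟨fun a ha b hb c hc => ?_⟩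
  obtain ⟨y, hy, hyc⟩ := exists_mem_segment_apply_eq (p := realify ![k, a])
    (q := realify ![k, b]) 1 (r := c) (Set.Icc_subset_uIcc (by simpa [realify] using hc))
  have hyk : y 0 = k := by
    obtain ⟨θ, μ, -, -, hθμ, rfl⟩ := hy
    simp [realify, ← add_mul, hθμ]
  simpa [hyc] using
    hS.floor_mem_column (segment_realify_subset_convexHull (p := ![k, a]) ha hb hy) hyk

lemma IsIntegrallyConvexSet.ordConnected_support (hS : IsIntegrallyConvexSet S) :
    {k | (column S k).Nonempty}.OrdConnected := by
  refine ⟨fun k₁ ⟨c₁, h₁⟩ k₂ ⟨c₂, h₂⟩ k hk => ?_⟩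
  obtain ⟨y, hy, hyk⟩ := exists_mem_segment_apply_eq (p := realify ![k₁, c₁])
    (q := realify ![k₂, c₂]) 0 (r := k) (Set.Icc_subset_uIcc (by simpa [realify] using hk))
  exact ⟨_, hS.floor_mem_column
    (segment_realify_subset_convexHull (p := ![k₁, c₁]) (q := ![k₂, c₂]) h₁ h₂ hy) hyk⟩

/-- A point of `S` next to the midpoint of the two given points lies in column `k'`, below `c₂`. -/
lemma IsIntegrallyConvexSet.exists_lt_mem_column_of_adjacent (hS : IsIntegrallyConvexSet S)
    {k k' c₁ c₂ : ℤ} (h₁ : c₁ ∈ column S k) (h₂ : c₂ ∈ column S k') (hk : |k - k'| = 1)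
    (hc : c₁ + 2 ≤ c₂) : ∃ c < c₂, c ∈ column S k' := by
  obtain ⟨z, ⟨hzS, hzN⟩, hz⟩ := hS.exists_mem_inter_dotProduct_le
    (midpoint_mem_convexHull_image_realify (p := ![k, c₁]) (q := ![k', c₂]) h₁ h₂)
    ![(k : ℝ) - k', 0]
  have h0 := abs_sub_lt_iff.mp (hzN 0)
  have h1 := abs_sub_lt_iff.mp (hzN 1)
  simp only [Matrix.vec2_dotProduct, Matrix.cons_val_zero, Matrix.cons_val_one,
    Matrix.cons_val_fin_one, zero_mul, add_zero, realify, Pi.add_apply, Pi.smul_apply,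
    smul_eq_mul] at hz h0 h1
  have hz0 : z 0 = k' := by
    have hkr : (k : ℝ) - k' = 1 ∨ (k : ℝ) - k' = -1 := by
      exact_mod_cast (abs_eq zero_le_one).mp hk
    have hle : ((z 0 : ℝ) - k') * 2 ≤ 1 ∧ ((k' : ℝ) - z 0) * 2 ≤ 1 := by
      rcases hkr with h | h <;> rw [h] at hz <;> constructor <;> linarith
    have h₁ : (z 0 - k') * 2 ≤ 1 := by exact_mod_cast hle.1
    have h₂ : (k' - z 0) * 2 ≤ 1 := by exact_mod_cast hle.2
    omega
  refine ⟨z 1, ?_, ?_⟩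
  · have : (c₁ : ℝ) + 2 ≤ c₂ := by exact_mod_cast hc
    have : (z 1 : ℝ) < c₂ := by linarith [h1.2]
    exact_mod_cast this
  · show ![k', z 1] ∈ S
    rwa [← hz0, vec_two_eta]

lemma column_finite (hfin : S.Finite) (k : ℤ) : (column S k).Finite :=
  hfin.preimage fun a _ b _ h => by simpa using congrFun h 1

lemma colMin_mem (hfin : S.Finite) {k : ℤ} (hk : (column S k).Nonempty) :
    colMin S k ∈ column S k :=
  Int.csInf_mem hk (column_finite hfin k).bddBelow

lemma colMin_le (hfin : S.Finite) {k c : ℤ} (hc : c ∈ column S k) : colMin S k ≤ c :=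
  csInf_le (column_finite hfin k).bddBelow hc

lemma IsIntegrallyConvexSet.colMin_le_colMin_add_one (hS : IsIntegrallyConvexSet S)
    (hfin : S.Finite) {k k' : ℤ} (hk : |k - k'| = 1) (h : (column S k).Nonempty)
    (h' : (column S k').Nonempty) : colMin S k' ≤ colMin S k + 1 := by
  by_contra! hlt
  obtain ⟨c, hc, hcS⟩ := hS.exists_lt_mem_column_of_adjacent (colMin_mem hfin h)
    (colMin_mem hfin h') hk (by omega)
  exact (colMin_le hfin hcS).not_gt hc

lemma IsIntegrallyConvexSet.abs_colMin_add_one_sub_colMin_le (hS : IsIntegrallyConvexSet S)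
    (hfin : S.Finite) {k : ℤ} (hk : (column S k).Nonempty) (hk' : (column S (k + 1)).Nonempty) :
    |colMin S (k + 1) - colMin S k| ≤ 1 := by
  have := hS.colMin_le_colMin_add_one hfin (k := k + 1) (k' := k) (by simp) hk' hk
  have := hS.colMin_le_colMin_add_one hfin (k' := k + 1) (by simp) hk hk'
  exact abs_le.2 ⟨by omega, by omega⟩

lemma IsIntegrallyConvexSet.discreteConvexOn_colMin (hS : IsIntegrallyConvexSet S)
    (hfin : S.Finite) : DiscreteConvexOn {k | (column S k).Nonempty} (colMin S) := by
  intro k hprev hnext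
  have hy := midpoint_mem_convexHull_image_realify (colMin_mem hfin hprev) (colMin_mem hfin hnext)
  have hk := colMin_le hfin (hS.floor_mem_column hy (by
    simp only [Pi.add_apply, Pi.smul_apply, smul_eq_mul, realify, Matrix.cons_val_zero,
      Int.cast_sub, Int.cast_add, Int.cast_one]
    ring))
  have hfl := Int.floor_le (((1 / 2 : ℝ) • realify ![k - 1, colMin S (k - 1)] +
    (1 / 2 : ℝ) • realify ![k + 1, colMin S (k + 1)]) 1)
  simp only [Pi.add_apply, Pi.smul_apply, smul_eq_mul, realify, Matrix.cons_val_one,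
    Matrix.cons_val_fin_one] at hfl hk
  have : (2 * colMin S k : ℝ) ≤ colMin S (k - 1) + colMin S (k + 1) := by
    linarith [(Int.cast_le (R := ℝ)).2 hk]
  exact_mod_cast this

lemma IsIntegrallyConvexSet.exists_le_mem_column_of_mem_slabHull (hS : IsIntegrallyConvexSet S)
    (hfin : S.Finite) {z : Fin 2 → ℤ} (hz : z ∈ slabHull octagonNormals S) :
    ∃ c ≤ z 1, c ∈ column S (z 0) := by
  have hcol : (column S (z 0)).Nonempty := by
    obtain ⟨⟨u, hu, hzu⟩, v, hv, hzv⟩ := hz ![1, 0] (by simp [octagonNormals])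
    simp only [Matrix.vec2_dotProduct, Matrix.cons_val_zero, Matrix.cons_val_one,
      Matrix.cons_val_fin_one, one_mul, zero_mul, add_zero] at hzu hzv
    refine hS.ordConnected_support.out ⟨u 1, ?_⟩ ⟨v 1, ?_⟩ ⟨hzu, hzv⟩ <;>
      simpa [column, vec_two_eta]
  have hsupport := hS.ordConnected_support
  obtain ⟨s, hs, hsupp⟩ := (hS.discreteConvexOn_colMin hfin).exists_abs_le_one_add_mul_sub_le
    (fun j => hS.abs_colMin_add_one_sub_colMin_le hfin) hcol
  have hsD : ![-s, 1] ∈ octagonNormals := by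
    have := abs_le.mp hs
    rcases (show s = -1 ∨ s = 0 ∨ s = 1 by omega) with rfl | rfl | rfl <;> simp [octagonNormals]
  obtain ⟨⟨w, hw, hwz⟩, -⟩ := hz _ hsD
  simp only [Matrix.vec2_dotProduct, Matrix.cons_val_zero, Matrix.cons_val_one,
    Matrix.cons_val_fin_one, neg_mul, one_mul] at hwz
  have := hsupp (w 0) ⟨w 1, by simpa [column, vec_two_eta]⟩
  have := colMin_le hfin (k := w 0) (c := w 1) (by simpa [column, vec_two_eta])
  exact ⟨colMin S (z 0), by linarith, colMin_mem hfin hcol⟩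

lemma IsIntegrallyConvexSet.slabHull_subset_of_finite (hS : IsIntegrallyConvexSet S)
    (hfin : S.Finite) : slabHull octagonNormals S ⊆ S := by
  intro z hz
  obtain ⟨a, ha, haS⟩ := hS.exists_le_mem_column_of_mem_slabHull hfin hz
  obtain ⟨b, hb, hbS⟩ := hS.neg.exists_le_mem_column_of_mem_slabHull hfin.neg
    (neg_mem_slabHull_neg hz)
  have hbS' : -b ∈ column S (z 0) := by simpa [column, Set.mem_neg] using hbS
  simpa [column, vec_two_eta] using
    (hS.ordConnected_column (z 0)).out haS hbS' ⟨ha, by simp only [Pi.neg_apply] at hb; omega⟩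

theorem IsIntegrallyConvexSet.slabHull_subset (hS : IsIntegrallyConvexSet S) :
    slabHull octagonNormals S ⊆ S := by
  intro z hz
  obtain ⟨N, hN⟩ := exists_mem_slabHull_inter_intCube (by simp [octagonNormals]) hz
  exact ((hS.inter_intCube N).slabHull_subset_of_finite
    ((intCube_finite 2 N).subset Set.inter_subset_right) hN).1

end Columns

section Cells

variable {T : Set (Fin 2 → ℤ)} {x : Fin 2 → ℝ}

lemma exists_mem_mul_add_mul_le (hx : x ∈ convexHull ℝ (realify '' T))
    {p q m : ℤ} (h : p * x 0 + q * x 1 < m + 1) : ∃ u ∈ T, p * u 0 + q * u 1 ≤ m := by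
  simpa only [Matrix.vec2_dotProduct, Matrix.cons_val_zero, Matrix.cons_val_one] using
    exists_mem_dotProduct_le_of_lt_add_one hx (c := ![p, q]) (by
      simpa only [realify, Matrix.vec2_dotProduct, Matrix.cons_val_zero, Matrix.cons_val_one]
        using h)

lemma exists_mem_le_mul_add_mul (hx : x ∈ convexHull ℝ (realify '' T))
    {p q m : ℤ} (h : m - 1 < p * x 0 + q * x 1) : ∃ v ∈ T, m ≤ p * v 0 + q * v 1 := by
  simpa only [Matrix.vec2_dotProduct, Matrix.cons_val_zero, Matrix.cons_val_one] using
    exists_mem_le_dotProduct_of_sub_one_lt hx (c := ![p, q]) (by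
      simpa only [realify, Matrix.vec2_dotProduct, Matrix.cons_val_zero, Matrix.cons_val_one]
        using h)

/- The coefficients are left unsimplified so that the two lemmas above apply verbatim. -/
lemma vec_mem_slabHull_octagonNormals {a b : ℤ} : ![a, b] ∈ slabHull octagonNormals T ↔
    ((∃ u ∈ T, 1 * u 0 + 0 * u 1 ≤ 1 * a + 0 * b) ∧ ∃ v ∈ T, 1 * a + 0 * b ≤ 1 * v 0 + 0 * v 1) ∧
    ((∃ u ∈ T, 0 * u 0 + 1 * u 1 ≤ 0 * a + 1 * b) ∧ ∃ v ∈ T, 0 * a + 1 * b ≤ 0 * v 0 + 1 * v 1) ∧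
    ((∃ u ∈ T, 1 * u 0 + 1 * u 1 ≤ 1 * a + 1 * b) ∧ ∃ v ∈ T, 1 * a + 1 * b ≤ 1 * v 0 + 1 * v 1) ∧
    ((∃ u ∈ T, -1 * u 0 + 1 * u 1 ≤ -1 * a + 1 * b) ∧
      ∃ v ∈ T, -1 * a + 1 * b ≤ -1 * v 0 + 1 * v 1) := by
  simp only [slabHull, octagonNormals, Set.mem_insert_iff, Set.mem_singleton_iff,
    forall_eq_or_imp, forall_eq, Matrix.vec2_dotProduct, Matrix.cons_val_zero, Matrix.cons_val_one,
    Matrix.cons_val_fin_one]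
  rfl

lemma vec_mem_intNbhd {a b : ℤ} (ha : x 0 - 1 < a) (ha' : a < x 0 + 1) (hb : x 1 - 1 < b)
    (hb' : b < x 1 + 1) : ![a, b] ∈ intNbhd x := by
  intro i
  fin_cases i <;> refine abs_sub_lt_iff.2 ⟨?_, ?_⟩ <;>
    simp only [Fin.zero_eta, Fin.mk_one, Matrix.cons_val_zero, Matrix.cons_val_one,
      Matrix.cons_val_fin_one] <;> linarith

lemma floor_corner_mem_of_sum_le (hT : slabHull octagonNormals T ⊆ T)
    (hx : x ∈ convexHull ℝ (realify '' T)) (hL : ∃ u ∈ T, u 0 + u 1 ≤ ⌊x 0⌋ + ⌊x 1⌋) :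
    ![⌊x 0⌋, ⌊x 1⌋] ∈ T ∩ intNbhd x := by
  have := Int.floor_add_fract (x 0); have := Int.fract_nonneg (x 0); have := Int.fract_lt_one (x 0)
  have := Int.floor_add_fract (x 1); have := Int.fract_nonneg (x 1); have := Int.fract_lt_one (x 1)
  obtain ⟨u, hu, hsum⟩ := hL
  refine ⟨hT (vec_mem_slabHull_octagonNormals.2
    ⟨⟨exists_mem_mul_add_mul_le hx ?_, exists_mem_le_mul_add_mul hx ?_⟩,
      ⟨exists_mem_mul_add_mul_le hx ?_, exists_mem_le_mul_add_mul hx ?_⟩,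
      ⟨⟨u, hu, by linarith⟩, exists_mem_le_mul_add_mul hx ?_⟩,
      ⟨exists_mem_mul_add_mul_le hx ?_, exists_mem_le_mul_add_mul hx ?_⟩⟩),
    vec_mem_intNbhd ?_ ?_ ?_ ?_⟩ <;> push_cast <;> linarith

lemma floor_corner_mem_of_le_sum (hT : slabHull octagonNormals T ⊆ T)
    (hx : x ∈ convexHull ℝ (realify '' T)) (ht : 0 < Int.fract (x 0)) (hs : 0 < Int.fract (x 1))
    (hU : ∃ v ∈ T, ⌊x 0⌋ + ⌊x 1⌋ + 2 ≤ v 0 + v 1) :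
    ![⌊x 0⌋ + 1, ⌊x 1⌋ + 1] ∈ T ∩ intNbhd x := by
  have := Int.floor_add_fract (x 0); have := Int.fract_lt_one (x 0)
  have := Int.floor_add_fract (x 1); have := Int.fract_lt_one (x 1)
  obtain ⟨v, hv, hsum⟩ := hU
  refine ⟨hT (vec_mem_slabHull_octagonNormals.2
    ⟨⟨exists_mem_mul_add_mul_le hx ?_, exists_mem_le_mul_add_mul hx ?_⟩,
      ⟨exists_mem_mul_add_mul_le hx ?_, exists_mem_le_mul_add_mul hx ?_⟩,
      ⟨exists_mem_mul_add_mul_le hx ?_, ⟨v, hv, by linarith⟩⟩,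
      ⟨exists_mem_mul_add_mul_le hx ?_, exists_mem_le_mul_add_mul hx ?_⟩⟩),
    vec_mem_intNbhd ?_ ?_ ?_ ?_⟩ <;> push_cast <;> linarith

lemma floor_corner_mem_of_diff_le (hT : slabHull octagonNormals T ⊆ T)
    (hx : x ∈ convexHull ℝ (realify '' T)) (ht : 0 < Int.fract (x 0))
    (hD : ∃ u ∈ T, u 1 - u 0 ≤ ⌊x 1⌋ - ⌊x 0⌋ - 1) :
    ![⌊x 0⌋ + 1, ⌊x 1⌋] ∈ T ∩ intNbhd x := by
  have := Int.floor_add_fract (x 0); have := Int.fract_lt_one (x 0)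
  have := Int.floor_add_fract (x 1); have := Int.fract_nonneg (x 1); have := Int.fract_lt_one (x 1)
  obtain ⟨u, hu, hdiff⟩ := hD
  refine ⟨hT (vec_mem_slabHull_octagonNormals.2
    ⟨⟨exists_mem_mul_add_mul_le hx ?_, exists_mem_le_mul_add_mul hx ?_⟩,
      ⟨exists_mem_mul_add_mul_le hx ?_, exists_mem_le_mul_add_mul hx ?_⟩,
      ⟨exists_mem_mul_add_mul_le hx ?_, exists_mem_le_mul_add_mul hx ?_⟩,
      ⟨⟨u, hu, by linarith⟩, exists_mem_le_mul_add_mul hx ?_⟩⟩),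
    vec_mem_intNbhd ?_ ?_ ?_ ?_⟩ <;> push_cast <;> linarith

lemma floor_corner_mem_of_le_diff (hT : slabHull octagonNormals T ⊆ T)
    (hx : x ∈ convexHull ℝ (realify '' T)) (hs : 0 < Int.fract (x 1))
    (hD : ∃ v ∈ T, ⌊x 1⌋ - ⌊x 0⌋ + 1 ≤ v 1 - v 0) :
    ![⌊x 0⌋, ⌊x 1⌋ + 1] ∈ T ∩ intNbhd x := by
  have := Int.floor_add_fract (x 0); have := Int.fract_nonneg (x 0); have := Int.fract_lt_one (x 0)
  have := Int.floor_add_fract (x 1); have := Int.fract_lt_one (x 1)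
  obtain ⟨v, hv, hdiff⟩ := hD
  refine ⟨hT (vec_mem_slabHull_octagonNormals.2
    ⟨⟨exists_mem_mul_add_mul_le hx ?_, exists_mem_le_mul_add_mul hx ?_⟩,
      ⟨exists_mem_mul_add_mul_le hx ?_, exists_mem_le_mul_add_mul hx ?_⟩,
      ⟨exists_mem_mul_add_mul_le hx ?_, exists_mem_le_mul_add_mul hx ?_⟩,
      ⟨exists_mem_mul_add_mul_le hx ?_, ⟨v, hv, by linarith⟩⟩⟩),
    vec_mem_intNbhd ?_ ?_ ?_ ?_⟩ <;> push_cast <;> linarith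

lemma eq_smul_add_smul_add_smul_realify {α β γ : ℝ} {a₁ b₁ a₂ b₂ a₃ b₃ : ℤ}
    (h0 : α * a₁ + β * a₂ + γ * a₃ = x 0) (h1 : α * b₁ + β * b₂ + γ * b₃ = x 1) :
    x = α • realify ![a₁, b₁] + β • realify ![a₂, b₂] + γ • realify ![a₃, b₃] := by
  ext i; fin_cases i <;> simp [realify, h0, h1]

lemma mem_convexHull_of_sum_le_of_le_sum (hT : slabHull octagonNormals T ⊆ T)
    (hx : x ∈ convexHull ℝ (realify '' T)) (hL : ∃ u ∈ T, u 0 + u 1 ≤ ⌊x 0⌋ + ⌊x 1⌋)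
    (hU : ∃ v ∈ T, ⌊x 0⌋ + ⌊x 1⌋ + 2 ≤ v 0 + v 1) :
    x ∈ convexHull ℝ (realify '' (T ∩ intNbhd x)) := by
  have hx0 := Int.floor_add_fract (x 0); have ht := Int.fract_nonneg (x 0)
  have hx1 := Int.floor_add_fract (x 1); have hs := Int.fract_nonneg (x 1)
  have := Int.fract_lt_one (x 0); have := Int.fract_lt_one (x 1)
  rcases le_total (Int.fract (x 1)) (Int.fract (x 0)) with hst | hts
  · convert add_add_smul_mem_convexHull (A := realify '' (T ∩ intNbhd x))
      (α := 1 - Int.fract (x 0)) (β := Int.fract (x 0) - Int.fract (x 1))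
      (γ := Int.fract (x 1)) (by linarith) (by linarith) (by linarith) (by ring)
      (q := realify ![⌊x 0⌋ + 1, ⌊x 1⌋]) (r := realify ![⌊x 0⌋ + 1, ⌊x 1⌋ + 1])
      (fun _ => Set.mem_image_of_mem _ (floor_corner_mem_of_sum_le hT hx hL))
      (fun h => Set.mem_image_of_mem _ ?_) (fun h => Set.mem_image_of_mem _ ?_) using 1
    · exact eq_smul_add_smul_add_smul_realify (by push_cast; linear_combination hx0)
        (by push_cast; linear_combination hx1)
    · have hst' := (sub_nonneg.2 hst).lt_of_ne' h
      obtain ⟨u, hu, hdiff⟩ := exists_mem_mul_add_mul_le hx (p := -1) (q := 1)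
        (m := ⌊x 1⌋ - ⌊x 0⌋ - 1) (by push_cast; linarith)
      exact floor_corner_mem_of_diff_le hT hx (by linarith) ⟨u, hu, by linarith⟩
    · exact floor_corner_mem_of_le_sum hT hx (by linarith [hs.lt_of_ne' h]) (hs.lt_of_ne' h) hU
  · convert add_add_smul_mem_convexHull (A := realify '' (T ∩ intNbhd x))
      (α := 1 - Int.fract (x 1)) (β := Int.fract (x 1) - Int.fract (x 0))
      (γ := Int.fract (x 0)) (by linarith) (by linarith) (by linarith) (by ring)
      (q := realify ![⌊x 0⌋, ⌊x 1⌋ + 1]) (r := realify ![⌊x 0⌋ + 1, ⌊x 1⌋ + 1])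
      (fun _ => Set.mem_image_of_mem _ (floor_corner_mem_of_sum_le hT hx hL))
      (fun h => Set.mem_image_of_mem _ ?_) (fun h => Set.mem_image_of_mem _ ?_) using 1
    · exact eq_smul_add_smul_add_smul_realify (by push_cast; linear_combination hx0)
        (by push_cast; linear_combination hx1)
    · have hts' := (sub_nonneg.2 hts).lt_of_ne' h
      obtain ⟨v, hv, hdiff⟩ := exists_mem_le_mul_add_mul hx (p := -1) (q := 1)
        (m := ⌊x 1⌋ - ⌊x 0⌋ + 1) (by push_cast; linarith)
      exact floor_corner_mem_of_le_diff hT hx (by linarith) ⟨v, hv, by linarith⟩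
    · exact floor_corner_mem_of_le_sum hT hx (ht.lt_of_ne' h) (by linarith [ht.lt_of_ne' h]) hU

/- Every point of `T` has `z₀ + z₁ ≤ ⌊x₀⌋ + ⌊x₁⌋ + 1`, so a point of `T` right of (above) `x`
satisfies the bound on `z₁ - z₀` that puts `(⌊x₀⌋ + 1, ⌊x₁⌋)` (`(⌊x₀⌋, ⌊x₁⌋ + 1)`) into `T`. -/
lemma mem_convexHull_of_sum_le_of_sum_lt (hT : slabHull octagonNormals T ⊆ T)
    (hx : x ∈ convexHull ℝ (realify '' T)) (hL : ∃ u ∈ T, u 0 + u 1 ≤ ⌊x 0⌋ + ⌊x 1⌋)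
    (hU : ∀ v ∈ T, v 0 + v 1 < ⌊x 0⌋ + ⌊x 1⌋ + 2) :
    x ∈ convexHull ℝ (realify '' (T ∩ intNbhd x)) := by
  have hx0 := Int.floor_add_fract (x 0); have ht := Int.fract_nonneg (x 0)
  have hx1 := Int.floor_add_fract (x 1); have hs := Int.fract_nonneg (x 1)
  have hsum : Int.fract (x 0) + Int.fract (x 1) ≤ 1 := by
    by_contra! h
    obtain ⟨v, hv, hv'⟩ := exists_mem_le_mul_add_mul hx (p := 1) (q := 1)
      (m := ⌊x 0⌋ + ⌊x 1⌋ + 2) (by push_cast; linarith)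
    linarith [hU v hv]
  convert add_add_smul_mem_convexHull (A := realify '' (T ∩ intNbhd x))
    (α := 1 - Int.fract (x 0) - Int.fract (x 1)) (β := Int.fract (x 0))
    (γ := Int.fract (x 1)) (by linarith) ht hs (by ring)
    (q := realify ![⌊x 0⌋ + 1, ⌊x 1⌋]) (r := realify ![⌊x 0⌋, ⌊x 1⌋ + 1])
    (fun _ => Set.mem_image_of_mem _ (floor_corner_mem_of_sum_le hT hx hL))
    (fun h => Set.mem_image_of_mem _ ?_) (fun h => Set.mem_image_of_mem _ ?_) using 1
  · exact eq_smul_add_smul_add_smul_realify (by push_cast; linear_combination hx0)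
      (by push_cast; linear_combination hx1)
  · obtain ⟨v, hv, hv0⟩ := exists_mem_le_mul_add_mul hx (p := 1) (q := 0)
      (m := ⌊x 0⌋ + 1) (by push_cast; linarith [ht.lt_of_ne' h])
    exact floor_corner_mem_of_diff_le hT hx (ht.lt_of_ne' h) ⟨v, hv, by linarith [hU v hv]⟩
  · obtain ⟨v, hv, hv1⟩ := exists_mem_le_mul_add_mul hx (p := 0) (q := 1)
      (m := ⌊x 1⌋ + 1) (by push_cast; linarith [hs.lt_of_ne' h])
    exact floor_corner_mem_of_le_diff hT hx (hs.lt_of_ne' h) ⟨v, hv, by linarith [hU v hv]⟩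

/- Every point of `T` has `z₀ + z₁ ≥ ⌊x₀⌋ + ⌊x₁⌋ + 1`, so a point of `T` below (left of) `x`
satisfies the bound on `z₁ - z₀` that puts `(⌊x₀⌋ + 1, ⌊x₁⌋)` (`(⌊x₀⌋, ⌊x₁⌋ + 1)`) into `T`. -/
lemma mem_convexHull_of_lt_sum (hT : slabHull octagonNormals T ⊆ T)
    (hx : x ∈ convexHull ℝ (realify '' T)) (hL : ∀ u ∈ T, ⌊x 0⌋ + ⌊x 1⌋ < u 0 + u 1) :
    x ∈ convexHull ℝ (realify '' (T ∩ intNbhd x)) := by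
  have hx0 := Int.floor_add_fract (x 0); have := Int.fract_lt_one (x 0)
  have hx1 := Int.floor_add_fract (x 1); have := Int.fract_lt_one (x 1)
  have hsum : 1 ≤ Int.fract (x 0) + Int.fract (x 1) := by
    by_contra! h
    obtain ⟨u, hu, hu'⟩ := exists_mem_mul_add_mul_le hx (p := 1) (q := 1)
      (m := ⌊x 0⌋ + ⌊x 1⌋) (by push_cast; linarith)
    linarith [hL u hu]
  obtain ⟨u, hu, hu1⟩ := exists_mem_mul_add_mul_le hx (p := 0) (q := 1)
    (m := ⌊x 1⌋) (by push_cast; linarith)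
  obtain ⟨w, hw, hw0⟩ := exists_mem_mul_add_mul_le hx (p := 1) (q := 0)
    (m := ⌊x 0⌋) (by push_cast; linarith)
  convert add_add_smul_mem_convexHull (A := realify '' (T ∩ intNbhd x))
    (α := 1 - Int.fract (x 1)) (β := 1 - Int.fract (x 0))
    (γ := Int.fract (x 0) + Int.fract (x 1) - 1) (by linarith) (by linarith) (by linarith)
    (by ring) (r := realify ![⌊x 0⌋ + 1, ⌊x 1⌋ + 1])
    (fun _ => Set.mem_image_of_mem _ (floor_corner_mem_of_diff_le hT hx (by linarith)
      ⟨u, hu, by linarith [hL u hu]⟩))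
    (fun _ => Set.mem_image_of_mem _ (floor_corner_mem_of_le_diff hT hx (by linarith)
      ⟨w, hw, by linarith [hL w hw]⟩))
    (fun h => Set.mem_image_of_mem _ ?_) using 1
  · exact eq_smul_add_smul_add_smul_realify (by push_cast; linear_combination hx0)
      (by push_cast; linear_combination hx1)
  · have hsum' := (sub_nonneg.2 hsum).lt_of_ne' h
    obtain ⟨v, hv, hv'⟩ := exists_mem_le_mul_add_mul hx (p := 1) (q := 1)
      (m := ⌊x 0⌋ + ⌊x 1⌋ + 2) (by push_cast; linarith)
    exact floor_corner_mem_of_le_sum hT hx (by linarith) (by linarith) ⟨v, hv, by linarith⟩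

/- Whether the corners `(⌊x₀⌋, ⌊x₁⌋)` and `(⌊x₀⌋ + 1, ⌊x₁⌋ + 1)` of the cell of `x` survive the
constraint on `z₀ + z₁` decides which triangle of the cell carries `x`. -/
theorem isIntegrallyConvexSet_of_slabHull_subset (hT : slabHull octagonNormals T ⊆ T) :
    IsIntegrallyConvexSet T := by
  intro x hx
  by_cases hL : ∃ u ∈ T, u 0 + u 1 ≤ ⌊x 0⌋ + ⌊x 1⌋
  · by_cases hU : ∃ v ∈ T, ⌊x 0⌋ + ⌊x 1⌋ + 2 ≤ v 0 + v 1
    · exact mem_convexHull_of_sum_le_of_le_sum hT hx hL hU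
    · push Not at hU
      exact mem_convexHull_of_sum_le_of_sum_lt hT hx hL hU
  · push Not at hL
    exact mem_convexHull_of_lt_sum hT hx hL

end Cells

theorem scaling_preserves_integrally_convex_set_dim2_general
    (S : Set (Fin 2 → ℤ)) (hS : IsIntegrallyConvexSet S) (α : ℕ) :
    IsIntegrallyConvexSet {x : Fin 2 → ℤ | (fun i => (α : ℤ) * x i) ∈ S} :=
  isIntegrallyConvexSet_of_slabHull_subset <|
    slabHull_preimage_smul_subset (Int.natCast_nonneg α) hS.slabHull_subset

/-- Scaling preserves integral convexity of sets in ℤ². -/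
theorem scaling_preserves_integrally_convex_set_dim2
    (S : Set (Fin 2 → ℤ)) (hS : IsIntegrallyConvexSet S) (α : ℕ) (hα : 0 < α) :
    IsIntegrallyConvexSet {x : Fin 2 → ℤ | (fun i => (α : ℤ) * x i) ∈ S} :=
  scaling_preserves_integrally_convex_set_dim2_general S hS α
end
end

section
/- If S ⊆ ℤ² is integrally convex, then for all x, y ∈ S, every point z ∈ ℤ² satisfying min(x_i,y_i) ≤ z_i ≤ max(x_i,y_i) for i=1,2, min(x₁−x₂, y₁−y₂) ≤ z₁−z₂ ≤ max(x₁−x₂, y₁−y₂), and min(x₁+x₂, y₁+y₂) ≤ z₁+z₂ ≤ max(x₁+x₂, y₁+y₂), belongs to S. -/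
open scoped BigOperators

noncomputable section

/-! Induction on the ℓ¹-distance from `x` to `y`. For `z ≠ x` in `ICH(x, y)` choose an integer
functional `c` with `c ⬝ᵥ x < c ⬝ᵥ y` such that every unit step `w` from `x` towards `y` with
`c ⬝ᵥ x < c ⬝ᵥ w` still has `z ∈ ICH(w, y)`. Integral convexity at the point `x + t • (y - x)`,
`t > 0` small, writes it as a convex combination of points of `S` that are unit steps from `x`
towards `y`, and one of them has larger `c`-value than `x`; continue from that point. -/

open Set

theorem Int.mem_uIcc_of_abs_add_mul_sub_sub_lt_one {a b w : ℤ} {t : ℝ} (ht : 0 < t)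
    (htb : t * |(b - a : ℝ)| < 1) (hw : |a + t * (b - a) - w| < 1) :
    w ∈ uIcc a b ∧ |w - a| ≤ 1 := by
  rw [← abs_of_pos ht, ← abs_mul] at htb
  obtain ⟨hw₁, hw₂⟩ := abs_lt.mp hw
  obtain ⟨hb₁, hb₂⟩ := abs_lt.mp htb
  have hup : w < a + 2 := by exact_mod_cast (by linarith : (w : ℝ) < a + 2)
  have hlo : a - 2 < w := by exact_mod_cast (by linarith : (a - 2 : ℝ) < w)
  have hpos : a < w → a < b := fun h => by
    have : (a : ℝ) + 1 ≤ w := by exact_mod_cast h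
    have : (0 : ℝ) < b - a := pos_of_mul_pos_right (by linarith : 0 < t * (b - a : ℝ)) ht.le
    exact_mod_cast sub_pos.mp this
  have hneg : w < a → b < a := fun h => by
    have : (w : ℝ) + 1 ≤ a := by exact_mod_cast h
    have : (b - a : ℝ) < 0 := neg_of_mul_neg_right (by linarith : t * (b - a : ℝ) < 0) ht.le
    exact_mod_cast sub_neg.mp this
  rw [mem_uIcc, abs_le]
  omega

theorem sum_natAbs_sub_lt_of_mem_uIcc {n : ℕ} {x y w : Fin n → ℤ}
    (hw : ∀ i, w i ∈ uIcc (x i) (y i)) (hne : w ≠ x) :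
    ∑ i, (y i - w i).natAbs < ∑ i, (y i - x i).natAbs := by
  obtain ⟨i, hi⟩ := Function.ne_iff.mp hne
  refine Finset.sum_lt_sum (fun j _ => ?_) ⟨i, Finset.mem_univ _, ?_⟩
  · have := mem_uIcc.mp (hw j); omega
  · have := mem_uIcc.mp (hw i); omega

theorem realify_dotProduct {n : ℕ} (u v : Fin n → ℤ) :
    realify u ⬝ᵥ realify v = ((u ⬝ᵥ v : ℤ) : ℝ) := by
  simp [realify, dotProduct]

def IsStepToward {n : ℕ} (x y w : Fin n → ℤ) : Prop :=
  ∀ i, w i ∈ uIcc (x i) (y i) ∧ |w i - x i| ≤ 1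

theorem IsIntegrallyConvexSet.exists_step_mem {n : ℕ} {S : Set (Fin n → ℤ)}
    (hS : IsIntegrallyConvexSet S) {x y : Fin n → ℤ} (hx : x ∈ S) (hy : y ∈ S)
    {c : Fin n → ℤ} (hc : c ⬝ᵥ x < c ⬝ᵥ y) :
    ∃ w ∈ S, IsStepToward x y w ∧ c ⬝ᵥ x < c ⬝ᵥ w := by
  set D : ℝ := 1 + ∑ i, |(y i - x i : ℝ)|
  have hD : 1 ≤ D := le_add_of_nonneg_right (Finset.sum_nonneg fun i _ => abs_nonneg _)
  set t : ℝ := D⁻¹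
  have ht : 0 < t := by positivity
  have htd (i : Fin n) : t * |(y i - x i : ℝ)| < 1 := by
    rw [inv_mul_lt_iff₀ (by positivity), mul_one]
    linarith [Finset.single_le_sum (fun j _ => abs_nonneg (y j - x j : ℝ)) (Finset.mem_univ i)]
  set p : Fin n → ℝ := realify x + t • (realify y - realify x)
  have hp : p ∈ convexHull ℝ (realify '' S) :=
    (convex_convexHull ℝ _).add_smul_sub_mem (subset_convexHull ℝ _ (mem_image_of_mem _ hx))
      (subset_convexHull ℝ _ (mem_image_of_mem _ hy)) ⟨ht.le, inv_le_one_of_one_le₀ hD⟩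
  obtain ⟨_, ⟨w, ⟨hwS, hwp⟩, rfl⟩, hle⟩ :=
    ((dotProductBilin ℝ ℝ (realify c)).convexOn convex_univ).exists_ge_of_mem_convexHull
      (subset_univ _) (hS p hp)
  refine ⟨w, hwS, fun i => Int.mem_uIcc_of_abs_add_mul_sub_sub_lt_one ht (htd i) (hwp i), ?_⟩
  have hc' : ((c ⬝ᵥ x : ℤ) : ℝ) < c ⬝ᵥ y := by exact_mod_cast hc
  simp only [dotProductBilin_apply_apply, p, dotProduct_add, dotProduct_smul, dotProduct_sub,
    realify_dotProduct, smul_eq_mul] at hle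
  exact_mod_cast (by nlinarith : ((c ⬝ᵥ x : ℤ) : ℝ) < c ⬝ᵥ w)

/-- The set `ICH(x, y)` of the paper. -/
def octagonalHull (x y : Fin 2 → ℤ) : Set (Fin 2 → ℤ) :=
  {z | (∀ i, z i ∈ uIcc (x i) (y i)) ∧ z 0 - z 1 ∈ uIcc (x 0 - x 1) (y 0 - y 1) ∧
    z 0 + z 1 ∈ uIcc (x 0 + x 1) (y 0 + y 1)}

/-- Let `j` be the coordinate in which `y - x` is shorter. If `z` moves away from `x` in
coordinate `j`, push in that direction; otherwise push along the other coordinate and against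
`y` in coordinate `j`, which forbids steps in coordinate `j`. -/
theorem exists_linear_lt_forall_step_mem_octagonalHull {x y z : Fin 2 → ℤ}
    (hz : z ∈ octagonalHull x y) (hzx : z ≠ x) :
    ∃ a b : ℤ, a * x 0 + b * x 1 < a * y 0 + b * y 1 ∧ ∀ w, IsStepToward x y w →
      a * x 0 + b * x 1 < a * w 0 + b * w 1 → z ∈ octagonalHull w y := by
  have hzx' : z 0 ≠ x 0 ∨ z 1 ≠ x 1 := by
    by_contra! h; exact hzx (funext (Fin.forall_fin_two.mpr h))
  simp only [octagonalHull, IsStepToward, mem_ofPred_eq, Fin.forall_fin_two, mem_uIcc,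
    abs_le] at hz ⊢
  rcases le_total (y 1 - x 1).natAbs (y 0 - x 0).natAbs with hA | hA
  · rcases lt_trichotomy (z 1) (x 1) with h | h | h
    · exact ⟨0, -1, by omega, fun w hw hcw => by omega⟩
    · rcases lt_or_gt_of_ne (hzx'.resolve_right (not_not.mpr h)) with h0 | h0 <;>
        rcases le_total (y 1) (x 1) with h1 | h1
      · exact ⟨-1, 1, by omega, fun w hw hcw => by omega⟩
      · exact ⟨-1, -1, by omega, fun w hw hcw => by omega⟩
      · exact ⟨1, 1, by omega, fun w hw hcw => by omega⟩
      · exact ⟨1, -1, by omega, fun w hw hcw => by omega⟩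
    · exact ⟨0, 1, by omega, fun w hw hcw => by omega⟩
  · rcases lt_trichotomy (z 0) (x 0) with h | h | h
    · exact ⟨-1, 0, by omega, fun w hw hcw => by omega⟩
    · rcases lt_or_gt_of_ne (hzx'.resolve_left (not_not.mpr h)) with h0 | h0 <;>
        rcases le_total (y 0) (x 0) with h1 | h1
      · exact ⟨1, -1, by omega, fun w hw hcw => by omega⟩
      · exact ⟨-1, -1, by omega, fun w hw hcw => by omega⟩
      · exact ⟨1, 1, by omega, fun w hw hcw => by omega⟩
      · exact ⟨-1, 1, by omega, fun w hw hcw => by omega⟩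
    · exact ⟨1, 0, by omega, fun w hw hcw => by omega⟩

theorem IsIntegrallyConvexSet.octagonalHull_subset {S : Set (Fin 2 → ℤ)}
    (hS : IsIntegrallyConvexSet S) {x y : Fin 2 → ℤ} (hx : x ∈ S) (hy : y ∈ S) :
    octagonalHull x y ⊆ S := by
  intro z hz
  induction hd : ∑ i, (y i - x i).natAbs using Nat.strong_induction_on generalizing x with
  | _ d ih =>
  by_cases hzx : z = x
  · exact hzx ▸ hx
  obtain ⟨a, b, hxy, hstep⟩ := exists_linear_lt_forall_step_mem_octagonalHull hz hzx
  have hdot (v : Fin 2 → ℤ) : ![a, b] ⬝ᵥ v = a * v 0 + b * v 1 := by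
    simp [dotProduct, Fin.sum_univ_two]
  obtain ⟨w, hwS, hw, hxw⟩ := hS.exists_step_mem hx hy (c := ![a, b]) (by rwa [hdot, hdot])
  rw [hdot, hdot] at hxw
  have hwx : w ≠ x := by rintro rfl; exact hxw.false
  exact ih _ (hd ▸ sum_natAbs_sub_lt_of_mem_uIcc (fun i => (hw i).1) hwx) hwS (hstep w hw hxw) rfl

/-- Any integrally convex set in ℤ² containing x and y contains ICH(x,y). -/
theorem integrally_convex_set_contains_ICH
    (S : Set (Fin 2 → ℤ)) (hS : IsIntegrallyConvexSet S)
    (x y : Fin 2 → ℤ) (hx : x ∈ S) (hy : y ∈ S) (z : Fin 2 → ℤ)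
    (h1 : ∀ i, min (x i) (y i) ≤ z i ∧ z i ≤ max (x i) (y i))
    (h2 : min (x 0 - x 1) (y 0 - y 1) ≤ z 0 - z 1 ∧
          z 0 - z 1 ≤ max (x 0 - x 1) (y 0 - y 1))
    (h3 : min (x 0 + x 1) (y 0 + y 1) ≤ z 0 + z 1 ∧
          z 0 + z 1 ≤ max (x 0 + x 1) (y 0 + y 1)) :
    z ∈ S :=
  hS.octagonalHull_subset hx hy ⟨h1, h2, h3⟩
end
end

section
/- Let f : ℤ² → ℝ ∪ {+∞} be an integrally convex function, α a positive integer, and x^α ∈ dom f. If f(x^α) ≤ f(x^α + α d) for all d ∈ {−1,0,+1}², then there exists a minimizer x* ∈ ℤ² of f with ‖x^α − x*‖_∞ ≤ 2(α − 1), provided f attains its minimum. -/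
open scoped BigOperators

noncomputable section

/-!
Take a minimizer `z` nearest to `xa` in the `ℓ∞` distance and suppose `‖z - xa‖∞ ≥ 2α - 1`.
After a signed permutation of the coordinates, `z - xa = (a, b)` with `0 ≤ b ≤ a`.
In the plane, integral convexity yields the exchange inequality
`f (x + d) + f w ≤ f x + f (w + d)` for a step `d ∈ {(1, 0), (1, 1)}` and `w - x` in the cone
`0 ≤ w₂ - x₂ ≤ w₁ - x₁`: it telescopes along a lattice path hugging the segment `[x, w + d]`,
whose points lie in `dom f`, from the two local inequalities
`2 f (p + d) ≤ f p + f (p + 2d)` and `f (p + (1, 0)) + f (p + (1, 1)) ≤ f p + f (p + (2, 1))`.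
Choose `d = (1, 0)` if `b ≤ a - α` and `d = (1, 1)` otherwise, and `w = z - d`, which is closer
to `xa` and hence not a minimizer: then `f` strictly decreases along `xa, xa + d, …, xa + α d`,
contradicting `f xa ≤ f (xa + α d)`.
-/

open Finset

namespace EReal

lemma sum_coe_mul_of_nonneg_s8 {ι : Type*} (s : Finset ι) {w : ι → ℝ} (hw : ∀ j ∈ s, 0 ≤ w j)
    (a : EReal) : ∑ j ∈ s, (w j : EReal) * a = ((∑ j ∈ s, w j : ℝ) : EReal) * a := by
  induction s using Finset.cons_induction with
  | empty => simp
  | cons j s hj ih =>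
    have hs : ∀ k ∈ s, 0 ≤ w k := fun k hk => hw k (mem_cons_of_mem hk)
    rw [sum_cons, sum_cons, ih hs, coe_add, right_distrib_of_nonneg
      (EReal.coe_nonneg.2 (hw j (mem_cons_self j s))) (EReal.coe_nonneg.2 (sum_nonneg hs))]

lemma sum_ne_bot {ι : Type*} {s : Finset ι} {g : ι → EReal} (hg : ∀ j ∈ s, g j ≠ ⊥) :
    ∑ j ∈ s, g j ≠ ⊥ :=
  sum_induction g (· ≠ ⊥) (fun _ _ ha hb => by simp [add_eq_bot_iff, ha, hb]) (by simp) hg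

lemma half_mul_add_half_mul (a : EReal) :
    ((1 / 2 : ℝ) : EReal) * a + ((1 / 2 : ℝ) : EReal) * a = a := by
  rw [← right_distrib_of_nonneg (by norm_num) (by norm_num), ← coe_add]
  norm_num

lemma add_le_add_of_half_mul_le {a b c d : EReal}
    (h : ((1 / 2 : ℝ) : EReal) * a + ((1 / 2 : ℝ) : EReal) * b ≤
      ((1 / 2 : ℝ) : EReal) * c + ((1 / 2 : ℝ) : EReal) * d) : a + b ≤ c + d := by
  have hhalf : (0 : EReal) ≤ ((1 / 2 : ℝ) : EReal) := by norm_num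
  rw [← left_distrib_of_nonneg_of_ne_top hhalf (coe_ne_top _),
    ← left_distrib_of_nonneg_of_ne_top hhalf (coe_ne_top _)] at h
  have h2 := mul_le_mul_of_nonneg_left h (show (0 : EReal) ≤ ((2 : ℝ) : EReal) by norm_num)
  rwa [← mul_assoc, ← mul_assoc, ← coe_mul, show (2 : ℝ) * (1 / 2) = 1 by norm_num, coe_one,
    one_mul, one_mul] at h2

lemma add_le_add_trans {a b c d u v : EReal}
    (hu : u ≠ ⊤) (hu' : u ≠ ⊥) (hv : v ≠ ⊤) (hv' : v ≠ ⊥)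
    (h₁ : a + u ≤ b + v) (h₂ : v + c ≤ u + d) : a + c ≤ b + d := by
  lift u to ℝ using ⟨hu, hu'⟩
  lift v to ℝ using ⟨hv, hv'⟩
  have h := add_le_add h₁ h₂
  rw [show a + u + (v + c) = a + c + ((u + v : ℝ) : EReal) by rw [coe_add]; abel,
    show b + v + (u + d) = b + d + ((u + v : ℝ) : EReal) by rw [coe_add]; abel] at h
  exact (addLECancellable_coe _).add_le_add_iff_right.mp h

lemma add_le_add_of_chain {B D : ℕ → EReal} {N : ℕ}
    (hB : ∀ c < N, B c ≠ ⊤ ∧ B c ≠ ⊥) (hD : ∀ c < N, D c ≠ ⊤ ∧ D c ≠ ⊥)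
    (hstep : ∀ c < N, D c + B (c + 1) ≤ B c + D (c + 1)) : D 0 + B N ≤ B 0 + D N := by
  suffices ∀ c ≤ N, D 0 + B c ≤ B 0 + D c from this N le_rfl
  intro c
  induction c with
  | zero => exact fun _ => (add_comm _ _).le
  | succ c ih =>
    intro hc
    exact add_le_add_trans (hB c hc).1 (hB c hc).2 (hD c hc).1 (hD c hc).2
      (ih (by omega)) (hstep c hc)

lemma lt_of_add_le_add_of_lt {a b c d : EReal} (h : a + b ≤ c + d) (hdb : d < b)
    (hc : c ≠ ⊤) (hc' : c ≠ ⊥) : a < c := by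
  lift c to ℝ using ⟨hc, hc'⟩
  by_contra! hca
  exact (add_lt_add_left_coe hdb c).not_ge (h.trans' (add_le_add_left hca b))

end EReal

section LocalExtension

variable {n : ℕ} {f : (Fin n → ℤ) → EReal}

lemma eq_of_abs_intCast_sub_lt_one {a b : ℤ} (h : |(a : ℝ) - b| < 1) : b = a := by
  rw [← Int.cast_sub, ← Int.cast_abs, ← Int.cast_one, Int.cast_lt, abs_lt] at h
  omega

lemma localExt_realify (p : Fin n → ℤ) : localExt f (realify p) = f p := by
  apply le_antisymm
  · apply sInf_le
    exact ⟨1, fun _ => 1, fun _ => p, fun _ => zero_le_one, by simp,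
      fun _ i => by simp [realify], fun i => by simp [realify], by simp⟩
  · apply le_sInf
    rintro v ⟨m, lam, y, h0, h1, hN, -, rfl⟩
    have hy : ∀ j, y j = p := fun j => funext fun i => eq_of_abs_intCast_sub_lt_one (hN j i)
    simp only [hy]
    rw [EReal.sum_coe_mul_of_nonneg_s8 _ (fun j _ => h0 j), h1, EReal.coe_one, one_mul]

lemma IsIntegrallyConvexFn.localExt_combo_le (hf : IsIntegrallyConvexFn f) (p q : Fin n → ℤ)
    {t : ℝ} (ht₀ : 0 ≤ t) (ht₁ : t ≤ 1) :
    localExt f (fun i => t * p i + (1 - t) * q i) ≤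
      (t : EReal) * f p + ((1 - t : ℝ) : EReal) * f q := by
  simpa only [localExt_realify, realify] using hf (realify p) (realify q) t ht₀ ht₁

lemma IsIntegrallyConvexFn.add_le_add_of_midpoint (hf : IsIntegrallyConvexFn f)
    {p q r : Fin n → ℤ} (h : ∀ i, p i + q i = 2 * r i) : f r + f r ≤ f p + f q := by
  have hc := hf.localExt_combo_le p q (t := 1 / 2) (by norm_num) (by norm_num)
  have hr : (fun i => 1 / 2 * (p i : ℝ) + (1 - 1 / 2) * q i) = realify r := by
    funext i
    have hi : (p i : ℝ) + q i = 2 * r i := by exact_mod_cast h i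
    simp only [realify]
    linarith
  rw [hr, localExt_realify, show (1 : ℝ) - 1 / 2 = 1 / 2 by norm_num] at hc
  exact EReal.add_le_add_of_half_mul_le ((EReal.half_mul_add_half_mul _).le.trans hc)

/-- On a point whose integer neighbours are only `p ≠ q`, every representation is forced to be
`(1 - θ) p + θ q`. -/
lemma localExt_ge_of_intNbhd_subset_pair {u : Fin n → ℝ} {p q : Fin n → ℤ} (hpq : p ≠ q)
    {θ : ℝ} (hu : ∀ i, u i = (1 - θ) * p i + θ * q i) (hN : intNbhd u ⊆ {p, q}) :
    ((1 - θ : ℝ) : EReal) * f p + (θ : EReal) * f q ≤ localExt f u := by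
  apply le_sInf
  rintro v ⟨m, lam, y, h0, h1, hyN, hy, rfl⟩
  set S := univ.filter fun j => y j = q
  set T := univ.filter fun j => ¬y j = q
  have hS : ∀ j ∈ S, y j = q := fun j hj => (mem_filter.1 hj).2
  have hT : ∀ j ∈ T, y j = p := fun j hj => (hN (hyN j)).resolve_right (mem_filter.1 hj).2
  have hST : ∑ j ∈ T, lam j = 1 - ∑ j ∈ S, lam j := by
    rw [← h1, ← sum_filter_add_sum_filter_not univ fun j => y j = q]
    ring
  have hθ : ∑ j ∈ S, lam j = θ := by
    obtain ⟨i, hi⟩ := Function.ne_iff.1 hpq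
    have hsum : ∑ j, lam j * (y j i : ℝ) = (∑ j ∈ S, lam j) * q i + (∑ j ∈ T, lam j) * p i := by
      rw [← sum_filter_add_sum_filter_not univ fun j => y j = q, sum_mul, sum_mul]
      exact congrArg₂ (· + ·) (sum_congr rfl fun j hj => by rw [hS j hj])
        (sum_congr rfl fun j hj => by rw [hT j hj])
    rw [hy i, hu i, hST] at hsum
    have hne : (q i : ℝ) - p i ≠ 0 := sub_ne_zero.2 (by exact_mod_cast hi.symm)
    exact mul_right_cancel₀ hne (by linarith)
  have hval : ∑ j, (lam j : EReal) * f (y j) =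
      ∑ j ∈ S, (lam j : EReal) * f q + ∑ j ∈ T, (lam j : EReal) * f p := by
    rw [← sum_filter_add_sum_filter_not univ fun j => y j = q]
    exact congrArg₂ (· + ·) (sum_congr rfl fun j hj => by rw [hS j hj])
      (sum_congr rfl fun j hj => by rw [hT j hj])
  rw [hval, EReal.sum_coe_mul_of_nonneg_s8 _ (fun j _ => h0 j),
    EReal.sum_coe_mul_of_nonneg_s8 _ (fun j _ => h0 j), hST, hθ, add_comm]

lemma exists_rep_of_localExt_ne_top (hbot : ∀ x, f x ≠ ⊥) {u : Fin n → ℝ}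
    (hu : localExt f u ≠ ⊤) :
    ∃ (m : ℕ) (lam : Fin m → ℝ) (y : Fin m → Fin n → ℤ), (∀ j, 0 ≤ lam j) ∧ ∑ j, lam j = 1 ∧
      (∀ j, y j ∈ intNbhd u) ∧ (∀ i, ∑ j, lam j * (y j i : ℝ) = u i) ∧
      ∀ j, 0 < lam j → f (y j) ≠ ⊤ := by
  obtain ⟨v, ⟨m, lam, y, h0, h1, hN, hy, rfl⟩, hv⟩ := sInf_lt_iff.1 (lt_top_iff_ne_top.2 hu)
  refine ⟨m, lam, y, h0, h1, hN, hy, fun j hj htop => hv.ne ?_⟩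
  have hbot' : ∀ k ∈ univ.erase j, (lam k : EReal) * f (y k) ≠ ⊥ := fun k _ =>
    (EReal.mul_ne_bot _ _).2
      ⟨.inl (EReal.coe_ne_bot _), .inr (hbot _), .inl (EReal.coe_ne_top _), .inl (by simp [h0 k])⟩
  rw [← add_sum_erase _ _ (mem_univ j), htop, EReal.coe_mul_top_of_pos hj,
    EReal.top_add_of_ne_bot (EReal.sum_ne_bot hbot')]

lemma exists_pos_weight_eq_of_abs_sub_lt_one {m : ℕ} {lam : Fin m → ℝ} {y : Fin m → ℤ} {r : ℝ}
    (h0 : ∀ j, 0 ≤ lam j) (h1 : ∑ j, lam j = 1) (hr : ∑ j, lam j * (y j : ℝ) = r)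
    (hy : ∀ j, |r - y j| < 1) {k : ℤ} (hk : |r - k| < 1) : ∃ j, 0 < lam j ∧ y j = k := by
  by_contra! hne
  have hne' : ∀ j, lam j = 0 ∨ y j ≠ k := fun j => (h0 j).eq_or_lt.imp Eq.symm (hne j)
  rw [abs_lt] at hk
  rcases le_total (k : ℝ) r with hkr | hrk
  · have hle : ∀ j, lam j * (k + 1) ≤ lam j * y j := fun j => by
      rcases hne' j with h | h
      · simp [h]
      · have hyj := (abs_lt.1 (hy j)).2
        have : k - 1 < y j := by exact_mod_cast (show (k : ℝ) - 1 < y j by linarith)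
        have : (k : ℝ) + 1 ≤ y j := by exact_mod_cast (show k + 1 ≤ y j by omega)
        exact mul_le_mul_of_nonneg_left this (h0 j)
    have := sum_le_sum fun j (_ : j ∈ univ) => hle j
    rw [← sum_mul, h1, hr] at this
    linarith
  · have hle : ∀ j, lam j * y j ≤ lam j * (k - 1) := fun j => by
      rcases hne' j with h | h
      · simp [h]
      · have hyj := (abs_lt.1 (hy j)).1
        have : y j < k + 1 := by exact_mod_cast (show (y j : ℝ) < k + 1 by linarith)
        have : (y j : ℝ) ≤ k - 1 := by exact_mod_cast (show y j ≤ k - 1 by omega)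
        exact mul_le_mul_of_nonneg_left this (h0 j)
    have := sum_le_sum fun j (_ : j ∈ univ) => hle j
    rw [← sum_mul, h1, hr] at this
    linarith

end LocalExtension

section Transport

variable {n : ℕ} {f : (Fin n → ℤ) → EReal}

lemma localExt_le_localExt_comp (g : (Fin n → ℤ) → Fin n → ℤ)
    (L : (Fin n → ℝ) →ᵃ[ℝ] Fin n → ℝ) (hg : ∀ y, realify (g y) = L (realify y))
    (hN : ∀ u y, y ∈ intNbhd u → g y ∈ intNbhd (L u)) (u : Fin n → ℝ) :
    localExt f (L u) ≤ localExt (f ∘ g) u := by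
  apply sInf_le_sInf
  rintro v ⟨m, lam, y, h0, h1, hyN, hy, rfl⟩
  refine ⟨m, lam, g ∘ y, h0, h1, fun j => hN u (y j) (hyN j), fun i => ?_, rfl⟩
  have hu : u = ∑ j, lam j • realify (y j) := funext fun i => by
    simp [Finset.sum_apply, realify, hy i]
  have hLu : L u = ∑ j, lam j • realify (g (y j)) := by
    rw [hu, ← affineCombination_eq_linear_combination _ _ _ h1, map_affineCombination _ _ _ h1,
      affineCombination_eq_linear_combination _ _ _ h1]
    simp [hg]
  simp [hLu, Finset.sum_apply, realify]

lemma localExt_comp_equiv (g : (Fin n → ℤ) ≃ (Fin n → ℤ))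
    (L : (Fin n → ℝ) ≃ᵃ[ℝ] Fin n → ℝ) (hg : ∀ y, realify (g y) = L (realify y))
    (hN : ∀ u y, g y ∈ intNbhd (L u) ↔ y ∈ intNbhd u) (u : Fin n → ℝ) :
    localExt (f ∘ g) u = localExt f (L u) := by
  refine le_antisymm ?_ (localExt_le_localExt_comp g L.toAffineMap hg (fun u y => (hN u y).2) u)
  have hg' : ∀ y, realify (g.symm y) = L.symm (realify y) := fun y => by
    rw [L.eq_symm_apply, ← hg, g.apply_symm_apply]
  have hN' : ∀ u y, y ∈ intNbhd u → g.symm y ∈ intNbhd (L.symm u) := fun u y hy => by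
    rwa [← hN, g.apply_symm_apply, L.apply_symm_apply]
  simpa [Function.comp_def] using
    localExt_le_localExt_comp (f := f ∘ g) g.symm L.symm.toAffineMap hg' hN' (L u)

lemma IsIntegrallyConvexFn.comp_equiv (hf : IsIntegrallyConvexFn f)
    (g : (Fin n → ℤ) ≃ (Fin n → ℤ)) (L : (Fin n → ℝ) ≃ᵃ[ℝ] Fin n → ℝ)
    (hg : ∀ y, realify (g y) = L (realify y))
    (hN : ∀ u y, g y ∈ intNbhd (L u) ↔ y ∈ intNbhd u) : IsIntegrallyConvexFn (f ∘ g) := by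
  intro x y t ht₀ ht₁
  simp only [localExt_comp_equiv g L hg hN]
  have hL : L (t • x + (1 - t) • y) = fun i => t * L x i + (1 - t) * L y i := by
    have h := Convex.combo_affine_apply (f := L.toAffineMap) (x := x) (y := y) (a := t)
      (b := 1 - t) (add_sub_cancel t 1)
    funext i
    simpa using congrFun h i
  rw [show (fun i => t * x i + (1 - t) * y i) = t • x + (1 - t) • y from rfl, hL]
  exact hf _ _ t ht₀ ht₁

def signedPerm (R : Type*) [Ring R] (σ : Equiv.Perm (Fin n)) (s : Finset (Fin n)) :
    (Fin n → R) ≃ₗ[R] (Fin n → R) :=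
  (LinearEquiv.funCongrLeft R R σ).trans
    (LinearEquiv.piCongrRight fun i => if i ∈ s then LinearEquiv.neg R else LinearEquiv.refl R R)

lemma signedPerm_apply (R : Type*) [Ring R] (σ : Equiv.Perm (Fin n)) (s : Finset (Fin n))
    (v : Fin n → R) (i : Fin n) :
    signedPerm R σ s v i = if i ∈ s then -v (σ i) else v (σ i) := by
  by_cases hi : i ∈ s <;> simp [signedPerm, hi]

lemma abs_signedPerm_apply (R : Type*) [Ring R] [LinearOrder R] [IsOrderedRing R]
    (σ : Equiv.Perm (Fin n)) (s : Finset (Fin n)) (v : Fin n → R) (i : Fin n) :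
    |signedPerm R σ s v i| = |v (σ i)| := by
  rw [signedPerm_apply]
  split_ifs <;> simp

lemma IsIntegrallyConvexFn.comp_add_signedPerm (hf : IsIntegrallyConvexFn f) (x : Fin n → ℤ)
    (σ : Equiv.Perm (Fin n)) (s : Finset (Fin n)) :
    IsIntegrallyConvexFn fun y => f (x + signedPerm ℤ σ s y) := by
  set L : (Fin n → ℝ) ≃ᵃ[ℝ] (Fin n → ℝ) :=
    (signedPerm ℝ σ s).toAffineEquiv.trans (AffineEquiv.constVAdd ℝ _ (realify x))
  have hL : ∀ u i, L u i = x i + signedPerm ℝ σ s u i := fun _ _ => rfl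
  have hgL : ∀ y, realify (x + signedPerm ℤ σ s y) = L (realify y) := fun y => by
    ext i
    simp only [hL, realify, Pi.add_apply, signedPerm_apply]
    split_ifs <;> simp
  refine hf.comp_equiv ((signedPerm ℤ σ s).toEquiv.trans (Equiv.addLeft x)) L hgL fun u y => ?_
  have hdist : ∀ i, |L u i - ((x + signedPerm ℤ σ s y) i : ℝ)| = |u (σ i) - y (σ i)| :=
    fun i => by
    rw [show ((x + signedPerm ℤ σ s y) i : ℝ) = L (realify y) i from congrFun (hgL y) i, hL, hL,
      add_sub_add_left_eq_sub, ← Pi.sub_apply, ← map_sub, abs_signedPerm_apply]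
    rfl
  change (∀ i, |L u i - ((x + signedPerm ℤ σ s y) i : ℝ)| < 1) ↔ ∀ i, |u i - y i| < 1
  simp only [hdist]
  exact σ.forall_congr_right (q := fun i => |u i - y i| < 1)

end Transport

lemma lt_of_exchange {G : Type*} [AddCommGroup G] {f : G → EReal} (hbot : ∀ x, f x ≠ ⊥)
    {x z d : G} {k : ℕ} (hk : 0 < k) (hx : f x ≠ ⊤) (hzd : f z < f (z - d))
    (hex : ∀ i < k, f (x + i • d) ≠ ⊤ → f (x + i • d + d) + f (z - d) ≤ f (x + i • d) + f z) :
    f (x + k • d) < f x := by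
  have hdesc : ∀ i < k, f (x + i • d) ≠ ⊤ → f (x + (i + 1) • d) < f (x + i • d) :=
    fun i hi hxi => by
    rw [succ_nsmul, ← add_assoc]
    exact EReal.lt_of_add_le_add_of_lt (hex i hi hxi) hzd hxi (hbot _)
  suffices ∀ i, i + 1 ≤ k → f (x + (i + 1) • d) < f x by
    obtain ⟨i, rfl⟩ : ∃ i, k = i + 1 := ⟨k - 1, by omega⟩
    exact this i le_rfl
  intro i
  induction i with
  | zero => exact fun _ => by simpa using hdesc 0 hk (by simpa using hx)
  | succ i ih =>
    intro hi
    have h := ih (by omega)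
    exact (hdesc (i + 1) (by omega) (ne_top_of_lt h)).trans h

/-- With `(s₁, s₂) = (N + 1, t₂ + e)`, both `(c, pathHeight N t₂ e c)` and
`(c + 1, pathHeight N t₂ e c + e)` lie within vertical distance `< 1` of the segment from `0` to
`(s₁, s₂)`. -/
def pathHeight (N : ℕ) (t₂ e : ℤ) (c : ℕ) : ℤ := ((c + 1) * (t₂ + e) - e) / (N + 1)

lemma mul_pathHeight_le (N : ℕ) (t₂ e : ℤ) (c : ℕ) :
    (N + 1) * pathHeight N t₂ e c ≤ (c + 1) * (t₂ + e) - e :=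
  Int.mul_ediv_self_le (by positivity)

lemma lt_mul_pathHeight_add (N : ℕ) (t₂ e : ℤ) (c : ℕ) :
    (c + 1) * (t₂ + e) - e < (N + 1) * pathHeight N t₂ e c + (N + 1) :=
  Int.lt_mul_ediv_self_add (by positivity)

section PathHeight

variable {N : ℕ} {t₂ e : ℤ}

lemma pathHeight_zero (ht₀ : 0 ≤ t₂) (ht₁ : t₂ ≤ N) : pathHeight N t₂ e 0 = 0 :=
  Int.ediv_eq_zero_of_lt (by simp; omega) (by simp; omega)

lemma pathHeight_last (he : e = 0 ∨ e = 1) : pathHeight N t₂ e N = t₂ := by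
  have := mul_pathHeight_le N t₂ e N
  have := lt_mul_pathHeight_add N t₂ e N
  have : pathHeight N t₂ e N ≤ t₂ := by rcases he with rfl | rfl <;> nlinarith
  have : t₂ ≤ pathHeight N t₂ e N := by rcases he with rfl | rfl <;> nlinarith
  omega

lemma pathHeight_succ (he : e = 0 ∨ e = 1) (ht₀ : 0 ≤ t₂) (ht₁ : t₂ ≤ N) (c : ℕ) :
    pathHeight N t₂ e (c + 1) = pathHeight N t₂ e c ∨
      pathHeight N t₂ e (c + 1) = pathHeight N t₂ e c + 1 := by
  have hs : (0 : ℤ) < N + 1 := by positivity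
  have := mul_pathHeight_le N t₂ e c
  have := lt_mul_pathHeight_add N t₂ e (c + 1)
  have := mul_pathHeight_le N t₂ e (c + 1)
  have := lt_mul_pathHeight_add N t₂ e c
  have he₀ : 0 ≤ e := by omega
  have he₁ : e ≤ 1 := by omega
  push_cast at *
  have h₁ : (N + 1) * (pathHeight N t₂ e c - pathHeight N t₂ e (c + 1)) < (N + 1) * 1 := by
    linarith
  have h₂ : (N + 1) * (pathHeight N t₂ e (c + 1) - pathHeight N t₂ e c) < (N + 1) * 2 := by
    linarith
  have := Int.lt_of_mul_lt_mul_left h₁ hs.le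
  have := Int.lt_of_mul_lt_mul_left h₂ hs.le
  omega

end PathHeight

section Plane

variable {f : (Fin 2 → ℤ) → EReal}

lemma IsIntegrallyConvexFn.add_le_add_knight (hf : IsIntegrallyConvexFn f) (P : Fin 2 → ℤ) :
    f (P + ![1, 0]) + f (P + ![1, 1]) ≤ f P + f (P + ![2, 1]) := by
  have hc := hf.localExt_combo_le P (P + ![2, 1]) (t := 1 / 2) (by norm_num) (by norm_num)
  have hpq : P + ![1, 0] ≠ P + ![1, 1] := fun h => by simpa using congrFun h 1
  have hlow := localExt_ge_of_intNbhd_subset_pair (f := f) hpq (θ := 1 / 2)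
    (u := fun i => 1 / 2 * (P i : ℝ) + (1 - 1 / 2) * (((P + ![2, 1] : Fin 2 → ℤ) i : ℤ) : ℝ))
    (fun i => by fin_cases i <;> simp <;> ring) ?_
  · rw [show (1 : ℝ) - 1 / 2 = 1 / 2 by norm_num] at hc hlow
    exact EReal.add_le_add_of_half_mul_le (hlow.trans hc)
  intro z hz
  have h0 := abs_lt.1 (hz 0)
  have h1 := abs_lt.1 (hz 1)
  simp only [Fin.isValue, Pi.add_apply, Matrix.cons_val_zero, Matrix.cons_val_one,
    Int.cast_add, Int.cast_ofNat, Int.cast_one] at h0 h1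
  have a0 : P 0 < z 0 := by exact_mod_cast (show (P 0 : ℝ) < z 0 by linarith)
  have b0 : z 0 < P 0 + 2 := by exact_mod_cast (show (z 0 : ℝ) < P 0 + 2 by linarith)
  have a1 : P 1 - 1 < z 1 := by exact_mod_cast (show (P 1 : ℝ) - 1 < z 1 by linarith)
  have b1 : z 1 < P 1 + 2 := by exact_mod_cast (show (z 1 : ℝ) < P 1 + 2 by linarith)
  rcases (show z 1 = P 1 ∨ z 1 = P 1 + 1 by omega) with h | h
  · left
    ext i; fin_cases i <;> simp <;> omega
  · right
    ext i; fin_cases i <;> simp <;> omega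

lemma IsIntegrallyConvexFn.exchange_step (hf : IsIntegrallyConvexFn f) (P : Fin 2 → ℤ)
    {e δ : ℤ} (he : e = 0 ∨ e = 1) (hδ : δ = 0 ∨ δ = 1) :
    f (P + ![1, e]) + f (P + ![1, δ]) ≤ f P + f (P + ![1, e] + ![1, δ]) := by
  have hmid : ∀ c : ℤ, f (P + ![1, c]) + f (P + ![1, c]) ≤ f P + f (P + ![1, c] + ![1, c]) :=
    fun c => hf.add_le_add_of_midpoint fun i => by
      fin_cases i <;> simp [Matrix.vecHead, Matrix.vecTail] <;> ring
  have hknight := hf.add_le_add_knight P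
  have h21 : P + ![1, 0] + ![1, 1] = P + ![2, 1] := by
    rw [add_assoc, Matrix.cons_add_cons]; norm_num
  have h12 : P + ![1, 1] + ![1, 0] = P + ![2, 1] := by
    rw [add_assoc, Matrix.cons_add_cons]; norm_num
  rcases he with rfl | rfl <;> rcases hδ with rfl | rfl
  · exact hmid 0
  · rwa [h21]
  · rwa [h12, add_comm (f _)]
  · exact hmid 1

lemma IsIntegrallyConvexFn.ne_top_of_near_segment (hf : IsIntegrallyConvexFn f)
    (hbot : ∀ x, f x ≠ ⊥) {x : Fin 2 → ℤ} {s₁ s₂ c h : ℤ} (hx : f x ≠ ⊤)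
    (hxs : f (x + ![s₁, s₂]) ≠ ⊤) (hs : 0 < s₁) (hc₀ : 0 ≤ c) (hc₁ : c ≤ s₁)
    (hh : |h * s₁ - c * s₂| < s₁) : f (x + ![c, h]) ≠ ⊤ := by
  have hs' : (0 : ℝ) < s₁ := by exact_mod_cast hs
  set t : ℝ := c / s₁ with ht
  have hcomb : ∀ (r : ℝ) {a : EReal}, a ≠ ⊤ → a ≠ ⊥ → (r : EReal) * a ≠ ⊤ := fun r a ha ha' => by
    lift a to ℝ using ⟨ha, ha'⟩
    exact EReal.coe_ne_top (r * a)
  have hfin := ne_top_of_le_ne_top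
    (EReal.add_ne_top (hcomb t hxs (hbot _)) (hcomb (1 - t) hx (hbot _)))
    (hf.localExt_combo_le (x + ![s₁, s₂]) x (t := t) (by positivity)
      (div_le_one_of_le₀ (by exact_mod_cast hc₁) hs'.le))
  obtain ⟨m, lam, y, h0, h1, hyN, hy, hdom⟩ := exists_rep_of_localExt_ne_top hbot hfin
  have hu₀ : t * ((x + ![s₁, s₂] : Fin 2 → ℤ) 0 : ℝ) + (1 - t) * x 0 = ((x 0 + c : ℤ) : ℝ) := by
    simp only [ht, Pi.add_apply, Matrix.cons_val_zero]
    push_cast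
    field_simp
    ring
  have hu₁ : t * ((x + ![s₁, s₂] : Fin 2 → ℤ) 1 : ℝ) + (1 - t) * x 1 - ((x 1 + h : ℤ) : ℝ) =
      ((c * s₂ - h * s₁ : ℤ) : ℝ) / s₁ := by
    simp only [ht, Pi.add_apply, Matrix.cons_val_one, Matrix.cons_val_zero]
    push_cast
    field_simp
    ring
  obtain ⟨j, hj, hj₁⟩ := exists_pos_weight_eq_of_abs_sub_lt_one h0 h1 (hy 1) (fun j => hyN j 1)
    (k := x 1 + h) (by
      rw [hu₁, abs_div, abs_of_pos hs', div_lt_one hs', ← Int.cast_abs, abs_sub_comm]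
      exact_mod_cast hh)
  have hj₀ : y j 0 = x 0 + c := eq_of_abs_intCast_sub_lt_one (hu₀ ▸ hyN j 0)
  have hyj : y j = x + ![c, h] := by
    ext i; fin_cases i
    · simpa using hj₀
    · simpa using hj₁
  exact hyj ▸ hdom j hj

lemma IsIntegrallyConvexFn.exchange_of_sector (hf : IsIntegrallyConvexFn f)
    (hbot : ∀ x, f x ≠ ⊥) (x : Fin 2 → ℤ) {e t₁ t₂ : ℤ} (he : e = 0 ∨ e = 1) (ht₀ : 0 ≤ t₂)
    (ht₁ : t₂ ≤ t₁) (hx : f x ≠ ⊤) (hy : f (x + ![t₁ + 1, t₂ + e]) ≠ ⊤) :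
    f (x + ![1, e]) + f (x + ![t₁, t₂]) ≤ f x + f (x + ![t₁ + 1, t₂ + e]) := by
  obtain ⟨N, rfl⟩ : ∃ N : ℕ, t₁ = N := ⟨t₁.toNat, (Int.toNat_of_nonneg (ht₀.trans ht₁)).symm⟩
  set h := pathHeight N t₂ e
  have h₀ : h 0 = 0 := pathHeight_zero ht₀ ht₁
  have hN : h N = t₂ := pathHeight_last he
  have hs : (0 : ℤ) < N + 1 := by positivity
  have hdom : ∀ c < N, f (x + ![(c : ℤ), h c]) ≠ ⊤ ∧ f (x + ![(c : ℤ), h c] + ![1, e]) ≠ ⊤ :=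
    fun c hc => by
    have hcN : (c : ℤ) < N := by exact_mod_cast hc
    have := mul_pathHeight_le N t₂ e c
    have := lt_mul_pathHeight_add N t₂ e c
    refine ⟨hf.ne_top_of_near_segment hbot hx hy hs (by positivity) (by omega) ?_, ?_⟩
    · rw [abs_lt]; constructor <;> nlinarith
    · rw [add_assoc, Matrix.cons_add_cons, Matrix.cons_add_cons, Matrix.empty_add_empty,
        add_comm (h c)]
      refine hf.ne_top_of_near_segment hbot hx hy hs (by positivity) (by omega) ?_
      rw [abs_lt]; rcases he with rfl | rfl <;> constructor <;> nlinarith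
  have key := EReal.add_le_add_of_chain (N := N) (B := fun c => f (x + ![(c : ℤ), h c]))
    (D := fun c => f (x + ![(c : ℤ), h c] + ![1, e]))
    (fun c hc => ⟨(hdom c hc).1, hbot _⟩) (fun c hc => ⟨(hdom c hc).2, hbot _⟩) fun c _ => by
      obtain ⟨δ, hδ, hδc⟩ : ∃ δ : ℤ, (δ = 0 ∨ δ = 1) ∧ h (c + 1) = h c + δ :=
        (pathHeight_succ he ht₀ ht₁ c).elim (fun h' => ⟨0, .inl rfl, by rw [add_zero]; exact h'⟩)
          fun h' => ⟨1, .inr rfl, h'⟩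
      have hnext : x + ![((c + 1 : ℕ) : ℤ), h (c + 1)] = x + ![(c : ℤ), h c] + ![1, δ] := by
        rw [hδc, add_assoc, Matrix.cons_add_cons, Matrix.cons_add_cons, Matrix.empty_add_empty]
        push_cast; rfl
      simp only [hnext]
      rw [add_assoc _ ![1, δ], add_comm ![1, δ], ← add_assoc]
      exact hf.exchange_step _ he hδ
  rw [Nat.cast_zero, h₀, hN,
    show (![0, 0] : Fin 2 → ℤ) = 0 by simp, add_zero, add_assoc _ ![(N : ℤ), t₂],
    Matrix.cons_add_cons, Matrix.cons_add_cons, Matrix.empty_add_empty] at key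
  exact key

theorem IsIntegrallyConvexFn.false_of_far_minimizer_of_sector (hf : IsIntegrallyConvexFn f)
    (hbot : ∀ x, f x ≠ ⊥) {α : ℕ} (hα : 0 < α) {x v : Fin 2 → ℤ} (hx : f x ≠ ⊤)
    (hloc : ∀ d : Fin 2 → ℤ, (∀ i, |d i| ≤ 1) → f x ≤ f (x + (α : ℤ) • d))
    (hv₁ : 0 ≤ v 1) (hv : v 1 ≤ v 0) (hfar : 2 * (α : ℤ) - 1 ≤ v 0)
    (hmin : ∀ w, f (x + v) ≤ f w)
    (hnear : ∀ w, (∀ i, |w i - x i| ≤ v 0 - 1) → ¬∀ w', f w ≤ f w') : False := by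
  obtain ⟨e, he, hcase⟩ : ∃ e : ℤ, (e = 0 ∨ e = 1) ∧ (e = 0 ∧ v 1 ≤ v 0 - α ∨ e = 1 ∧ α ≤ v 1) := by
    by_cases h : v 1 ≤ v 0 - α
    · exact ⟨0, .inl rfl, .inl ⟨rfl, h⟩⟩
    · exact ⟨1, .inr rfl, .inr ⟨rfl, by omega⟩⟩
  set d : Fin 2 → ℤ := ![1, e]
  have hzd : f (x + v) < f (x + v - d) := by
    have hvd : ∀ i, (x + v - d) i - x i = v i - d i := fun i => by
      simp only [Pi.sub_apply, Pi.add_apply]; ring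
    have h := hnear (x + v - d) fun i => by
      rw [hvd, abs_le]
      rcases hcase with ⟨rfl, _⟩ | ⟨rfl, _⟩ <;> fin_cases i <;> simp [d] <;> omega
    simp only [not_forall, not_le] at h
    obtain ⟨w, hw⟩ := h
    exact (hmin w).trans_lt hw
  have hdesc := lt_of_exchange hbot hα hx hzd fun i hi hxi => by
    have ht₀ : 0 ≤ v 1 - e - i * e := by rcases he with rfl | rfl <;> simp <;> omega
    have ht₁ : v 1 - e - i * e ≤ v 0 - 1 - i := by rcases he with rfl | rfl <;> simp <;> omega
    have hz : x + i • d + ![v 0 - 1 - i + 1, v 1 - e - i * e + e] = x + v := by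
      ext j; fin_cases j <;> simp [d, Matrix.vecHead, Matrix.vecTail] <;> ring
    have hzd : x + i • d + ![v 0 - 1 - i, v 1 - e - i * e] = x + v - d := by
      ext j; fin_cases j <;> simp [d, Matrix.vecHead, Matrix.vecTail] <;> ring
    have h := hf.exchange_of_sector hbot (x + i • d) he ht₀ ht₁ hxi
      (hz ▸ ne_top_of_le_ne_top hx (hmin x))
    rwa [hz, hzd] at h
  refine (hloc d fun i => ?_).not_gt (by rwa [natCast_zsmul])
  rcases he with rfl | rfl <;> fin_cases i <;> simp [d]

theorem IsIntegrallyConvexFn.false_of_far_minimizer (hf : IsIntegrallyConvexFn f)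
    (hbot : ∀ x, f x ≠ ⊥) {α : ℕ} (hα : 0 < α) {x z : Fin 2 → ℤ} {r : ℤ} (hx : f x ≠ ⊤)
    (hloc : ∀ d : Fin 2 → ℤ, (∀ i, |d i| ≤ 1) → f x ≤ f (x + (α : ℤ) • d))
    (hmin : ∀ w, f z ≤ f w) (hzr : ∀ i, |z i - x i| ≤ r) (hk : ∃ k, |z k - x k| = r)
    (hfar : 2 * (α : ℤ) - 1 ≤ r)
    (hnear : ∀ w, (∀ i, |w i - x i| ≤ r - 1) → ¬∀ w', f w ≤ f w') : False := by
  classical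
  obtain ⟨k, hk⟩ := hk
  set σ := Equiv.swap 0 k
  set sgn := univ.filter fun i => z i - x i < 0
  set S := signedPerm ℤ σ sgn
  set v : Fin 2 → ℤ := fun j => |z (σ j) - x (σ j)|
  have hv₀ : v 0 = r := by simp [v, σ, hk]
  have hSv : x + S v = z := by
    ext i
    simp only [Pi.add_apply, S, signedPerm_apply, v, σ, Equiv.swap_apply_self, sgn, mem_filter,
      mem_univ, true_and]
    split_ifs with h
    · rw [abs_of_neg h]; ring
    · rw [abs_of_nonneg (not_lt.1 h)]; ring
  have hbox : ∀ w : Fin 2 → ℤ, (∀ i, |w i| ≤ r - 1) → ∀ i, |(x + S w) i - x i| ≤ r - 1 :=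
    fun w hw i => by simpa [S, abs_signedPerm_apply] using hw (σ i)
  refine (hf.comp_add_signedPerm x σ sgn).false_of_far_minimizer_of_sector (fun _ => hbot _) hα
    (x := 0) (v := v) ?_ (fun d hd => ?_) (abs_nonneg _) (hv₀ ▸ hzr _) (hv₀ ▸ hfar) (fun w => ?_)
    (fun w hw hw' => hnear (x + S w) (hbox w fun i => by simpa [hv₀] using hw i) fun w' => ?_)
  · simpa using hx
  · have h := hloc (S d) fun i => by simpa [S, abs_signedPerm_apply] using hd (σ i)
    simpa only [zero_add, map_zero, add_zero, map_smul] using h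
  · show f (x + S (0 + v)) ≤ f (x + S w)
    rw [zero_add, hSv]
    exact hmin _
  · have h : f (x + S w) ≤ f (x + S (S.symm (w' - x))) := hw' (S.symm (w' - x))
    rwa [LinearEquiv.apply_symm_apply, add_sub_cancel] at h

end Plane

/-- Proximity theorem for integrally convex functions in two variables. -/
theorem integrally_convex_proximity_dim2
    (f : (Fin 2 → ℤ) → EReal) (hbot : ∀ x, f x ≠ ⊥)
    (hf : IsIntegrallyConvexFn f)
    (α : ℕ) (hα : 0 < α)
    (xa : Fin 2 → ℤ) (hdom : f xa ≠ ⊤)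
    (hmin : ∃ z, ∀ w, f z ≤ f w)
    (hloc : ∀ d : Fin 2 → ℤ, (∀ i, |d i| ≤ 1) →
      f xa ≤ f (fun i => xa i + (α : ℤ) * d i)) :
    ∃ xstar : Fin 2 → ℤ, (∀ w, f xstar ≤ f w) ∧
      ∀ i, |xa i - xstar i| ≤ 2 * ((α : ℤ) - 1) := by
  classical
  obtain ⟨z₀, hz₀⟩ := hmin
  have hex : ∃ r : ℕ, ∃ z, (∀ w, f z ≤ f w) ∧ ∀ i, |z i - xa i| ≤ r :=
    ⟨(|z₀ 0 - xa 0| + |z₀ 1 - xa 1|).toNat, z₀, hz₀, fun i => by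
      fin_cases i <;> simp⟩
  obtain ⟨z, hz, hzr⟩ := Nat.find_spec hex
  by_cases hr : (Nat.find hex : ℤ) ≤ 2 * ((α : ℤ) - 1)
  · exact ⟨z, hz, fun i => (abs_sub_comm _ _).trans_le ((hzr i).trans hr)⟩
  have hnear : ∀ w, (∀ i, |w i - xa i| ≤ (Nat.find hex : ℤ) - 1) → ¬∀ w', f w ≤ f w' :=
    fun w hw hw' => Nat.find_min hex (Nat.sub_lt (by omega) one_pos)
      ⟨w, hw', fun i => by rw [Nat.cast_sub (by omega)]; exact hw i⟩
  have hk : ∃ k, |z k - xa k| = Nat.find hex := by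
    by_contra! h
    exact hnear z (fun i => by have := hzr i; have := h i; omega) hz
  exact (hf.false_of_far_minimizer hbot hα hdom hloc hz hzr hk (by omega) hnear).elim
end
end

section
/- For A a nonempty subset of {1,…,n}, let B_A = {𝟙_A + e_i, 𝟙_A − e_i : i ∈ A} ∪ {𝟙_A + e_i : i ∉ A} ∪ {𝟙_A}, where 𝟙_A is the characteristic vector of A. Then B_A is a Hilbert basis of the convex cone it generates: every integer vector in the real cone generated by B_A is a nonnegative integer combination of vectors in B_A. -/
open scoped BigOperators

noncomputable section

/-! A vector `x` is a nonnegative combination of `B_A` iff `x_j ≥ 0` for `j ∉ A` and some level `t`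
satisfies `∑_{j ∉ A} x_j + ∑_{j ∈ A} |x_j - t| ≤ t`: `t` is the total weight of the combination,
and the slack in this inequality is the coefficient of `𝟙_A`. This holds over any ordered ring,
so over `ℤ` with an integer level. For an integer vector the slack is affine in `t` between
consecutive integers, so a real level with nonnegative slack can be replaced by `⌊t⌋` or `⌊t⌋ + 1`. -/

section HilbertBasis

variable {ι R : Type*} [Fintype ι] [DecidableEq ι]

def coneComb [Ring R] (A : Finset ι) (p m o : ι → R) (l : R) : ι → R :=
  (∑ i ∈ A, p i • ((fun j => if j ∈ A then (1 : R) else 0) + Pi.single i 1)) +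
    (∑ i ∈ A, m i • ((fun j => if j ∈ A then (1 : R) else 0) - Pi.single i 1)) +
    (∑ i ∈ Aᶜ, o i • ((fun j => if j ∈ A then (1 : R) else 0) + Pi.single i 1)) +
    l • (fun j => if j ∈ A then (1 : R) else 0)

lemma coneComb_apply [Ring R] (A : Finset ι) (p m o : ι → R) (l : R) (j : ι) :
    coneComb A p m o l j =
      if j ∈ A then (∑ i ∈ A, p i + ∑ i ∈ A, m i + ∑ i ∈ Aᶜ, o i + l) + p j - m j else o j := by
  by_cases hj : j ∈ A <;>
    simp [coneComb, hj, Finset.sum_apply, Pi.single_apply, mul_sub,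
      Finset.sum_add_distrib, Finset.sum_sub_distrib]
  abel

def coneSlack [Ring R] [LinearOrder R] (A : Finset ι) (x : ι → R) (t : R) : R :=
  t - ∑ j ∈ Aᶜ, x j - ∑ j ∈ A, |x j - t|

section OrderedRing

variable [Ring R] [LinearOrder R] [IsOrderedRing R]

lemma exists_coneSlack_nonneg_of_eq_coneComb {A : Finset ι} {x p m o : ι → R} {l : R}
    (hp : ∀ i, 0 ≤ p i) (hm : ∀ i, 0 ≤ m i) (ho : ∀ i, 0 ≤ o i) (hl : 0 ≤ l)
    (hx : x = coneComb A p m o l) : (∀ j ∉ A, 0 ≤ x j) ∧ ∃ t, 0 ≤ coneSlack A x t := by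
  have hxj (j) : x j = _ := congrFun hx j ▸ coneComb_apply A p m o l j
  refine ⟨fun j hj => by simpa [hxj j, hj] using ho j,
    ∑ i ∈ A, p i + ∑ i ∈ A, m i + ∑ i ∈ Aᶜ, o i + l, ?_⟩
  have habs : ∑ j ∈ A, |x j - (∑ i ∈ A, p i + ∑ i ∈ A, m i + ∑ i ∈ Aᶜ, o i + l)|
      ≤ ∑ j ∈ A, (p j + m j) := by
    refine Finset.sum_le_sum fun j hj => ?_
    rw [hxj j, if_pos hj, add_sub_assoc, add_sub_cancel_left]
    simpa [abs_of_nonneg (hp j), abs_of_nonneg (hm j)] using abs_sub (p j) (m j)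
  have hoff : ∑ j ∈ Aᶜ, x j = ∑ j ∈ Aᶜ, o j :=
    Finset.sum_congr rfl fun j hj => by simp [hxj j, Finset.mem_compl.mp hj]
  rw [coneSlack, hoff, sub_sub, sub_nonneg]
  rw [Finset.sum_add_distrib] at habs
  calc ∑ j ∈ Aᶜ, o j + ∑ j ∈ A, |x j - (∑ i ∈ A, p i + ∑ i ∈ A, m i + ∑ i ∈ Aᶜ, o i + l)|
      ≤ ∑ j ∈ Aᶜ, o j + (∑ i ∈ A, p i + ∑ i ∈ A, m i) := add_le_add_right habs _
    _ ≤ ∑ i ∈ A, p i + ∑ i ∈ A, m i + ∑ i ∈ Aᶜ, o i + l := by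
      rw [add_comm (∑ j ∈ Aᶜ, o j)]
      exact le_add_of_nonneg_right hl

lemma exists_eq_coneComb_of_coneSlack_nonneg {A : Finset ι} {x : ι → R} {t : R}
    (hx : ∀ j ∉ A, 0 ≤ x j) (ht : 0 ≤ coneSlack A x t) :
    ∃ p m o : ι → R, ∃ l : R, (∀ i, 0 ≤ p i) ∧ (∀ i, 0 ≤ m i) ∧ (∀ i, 0 ≤ o i) ∧ 0 ≤ l ∧
      x = coneComb A p m o l := by
  refine ⟨fun j => (x j - t)⁺, fun j => (x j - t)⁻, fun j => (x j)⁺, coneSlack A x t,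
    fun _ => posPart_nonneg _, fun _ => negPart_nonneg _, fun _ => posPart_nonneg _, ht, ?_⟩
  have htotal : ∑ i ∈ A, (x i - t)⁺ + ∑ i ∈ A, (x i - t)⁻ + ∑ i ∈ Aᶜ, (x i)⁺ + coneSlack A x t
      = t := by
    have hoff : ∑ i ∈ Aᶜ, (x i)⁺ = ∑ i ∈ Aᶜ, x i :=
      Finset.sum_congr rfl fun i hi => posPart_eq_self.mpr (hx i (Finset.mem_compl.mp hi))
    simp only [← Finset.sum_add_distrib, posPart_add_negPart, hoff, coneSlack]
    abel
  funext j
  by_cases hj : j ∈ A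
  · simp [coneComb_apply, hj, htotal, add_sub_assoc, posPart_sub_negPart]
  · simp [coneComb_apply, hj, posPart_eq_self.mpr (hx j hj)]

end OrderedRing

lemma abs_intCast_sub_eq_interp (k : ℤ) (x : ℝ) :
    |(k : ℝ) - x| = (1 - Int.fract x) * |(k : ℝ) - ⌊x⌋| + Int.fract x * |(k : ℝ) - (⌊x⌋ + 1)| := by
  rw [Int.fract]
  rcases le_or_gt k ⌊x⌋ with hk | hk
  · have hk' : (k : ℝ) ≤ ⌊x⌋ := by exact_mod_cast hk
    rw [abs_of_nonpos (by linarith [Int.floor_le x]), abs_of_nonpos (by linarith),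
      abs_of_nonpos (by linarith)]
    ring
  · have hk' : (⌊x⌋ : ℝ) + 1 ≤ k := by exact_mod_cast hk
    rw [abs_of_nonneg (by linarith [Int.lt_floor_add_one x]), abs_of_nonneg (by linarith),
      abs_of_nonneg (by linarith)]
    ring

lemma coneSlack_intCast_eq_interp (A : Finset ι) (z : ι → ℤ) (x : ℝ) :
    coneSlack A (fun j => (z j : ℝ)) x =
      (1 - Int.fract x) * coneSlack A z ⌊x⌋ + Int.fract x * coneSlack A z (⌊x⌋ + 1) := by
  simp only [coneSlack, abs_intCast_sub_eq_interp _ x, Finset.sum_add_distrib, ← Finset.mul_sum]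
  push_cast
  rw [Int.fract]
  ring

lemma exists_int_coneSlack_nonneg {A : Finset ι} {z : ι → ℤ} {x : ℝ}
    (hx : 0 ≤ coneSlack A (fun j => (z j : ℝ)) x) : ∃ L : ℤ, 0 ≤ coneSlack A z L := by
  by_contra! hneg
  have hfloor : ((coneSlack A z ⌊x⌋ : ℤ) : ℝ) < 0 := by exact_mod_cast hneg ⌊x⌋
  have hceil : ((coneSlack A z (⌊x⌋ + 1) : ℤ) : ℝ) < 0 := by exact_mod_cast hneg (⌊x⌋ + 1)
  rw [coneSlack_intCast_eq_interp] at hx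
  nlinarith [Int.fract_nonneg x, Int.fract_lt_one x]

end HilbertBasis

theorem hilbert_basis_BA_general {n : ℕ} (A : Finset (Fin n))
    (z : Fin n → ℤ)
    (hz : ∃ (μp μm μo : Fin n → ℝ) (lam : ℝ),
      (∀ i, 0 ≤ μp i) ∧ (∀ i, 0 ≤ μm i) ∧ (∀ i, 0 ≤ μo i) ∧ 0 ≤ lam ∧
      (fun j => (z j : ℝ)) =
        (∑ i ∈ A, μp i • ((fun j => if j ∈ A then (1 : ℝ) else 0) + Pi.single i 1)) +
        (∑ i ∈ A, μm i • ((fun j => if j ∈ A then (1 : ℝ) else 0) - Pi.single i 1)) +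
        (∑ i ∈ Aᶜ, μo i • ((fun j => if j ∈ A then (1 : ℝ) else 0) + Pi.single i 1)) +
        lam • (fun j => if j ∈ A then (1 : ℝ) else 0)) :
    ∃ (ap am ao : Fin n → ℕ) (l : ℕ),
      z =
        (∑ i ∈ A, ap i • ((fun j => if j ∈ A then (1 : ℤ) else 0) + Pi.single i 1)) +
        (∑ i ∈ A, am i • ((fun j => if j ∈ A then (1 : ℤ) else 0) - Pi.single i 1)) +
        (∑ i ∈ Aᶜ, ao i • ((fun j => if j ∈ A then (1 : ℤ) else 0) + Pi.single i 1)) +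
        l • (fun j => if j ∈ A then (1 : ℤ) else 0) := by
  obtain ⟨μp, μm, μo, lam, hμp, hμm, hμo, hlam, hzR⟩ := hz
  obtain ⟨hoff, t, ht⟩ := exists_coneSlack_nonneg_of_eq_coneComb hμp hμm hμo hlam hzR
  obtain ⟨L, hL⟩ := exists_int_coneSlack_nonneg ht
  obtain ⟨p, m, o, l, hp, hm, ho, hl, hzZ⟩ :=
    exists_eq_coneComb_of_coneSlack_nonneg (fun j hj => by exact_mod_cast hoff j hj) hL
  lift p to Fin n → ℕ using hp
  lift m to Fin n → ℕ using hm
  lift o to Fin n → ℕ using ho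
  lift l to ℕ using hl
  refine ⟨p, m, o, l, ?_⟩
  simpa only [coneComb, Function.comp_apply, natCast_zsmul] using hzZ

/-- B_A is a Hilbert basis of the cone it generates: every integer point of the
real cone generated by B_A is a nonnegative integer combination of B_A. -/
theorem hilbert_basis_BA {n : ℕ} (A : Finset (Fin n)) (hA : A.Nonempty)
    (z : Fin n → ℤ)
    (hz : ∃ (μp μm μo : Fin n → ℝ) (lam : ℝ),
      (∀ i, 0 ≤ μp i) ∧ (∀ i, 0 ≤ μm i) ∧ (∀ i, 0 ≤ μo i) ∧ 0 ≤ lam ∧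
      (fun j => (z j : ℝ)) =
        (∑ i ∈ A, μp i • ((fun j => if j ∈ A then (1 : ℝ) else 0) + Pi.single i 1)) +
        (∑ i ∈ A, μm i • ((fun j => if j ∈ A then (1 : ℝ) else 0) - Pi.single i 1)) +
        (∑ i ∈ Aᶜ, μo i • ((fun j => if j ∈ A then (1 : ℝ) else 0) + Pi.single i 1)) +
        lam • (fun j => if j ∈ A then (1 : ℝ) else 0)) :
    ∃ (ap am ao : Fin n → ℕ) (l : ℕ),
      z =
        (∑ i ∈ A, ap i • ((fun j => if j ∈ A then (1 : ℤ) else 0) + Pi.single i 1)) +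
        (∑ i ∈ A, am i • ((fun j => if j ∈ A then (1 : ℤ) else 0) - Pi.single i 1)) +
        (∑ i ∈ Aᶜ, ao i • ((fun j => if j ∈ A then (1 : ℤ) else 0) + Pi.single i 1)) +
        l • (fun j => if j ∈ A then (1 : ℤ) else 0) :=
  hilbert_basis_BA_general A z hz
end
end
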